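/- arXiv:1607.00565 — 3 statements merged into one kernel-verified Lean document; each statement's English description precedes it below -/
import Mathlib

section
/- Let f, h : Br_n → ℝ be arbitrary functions. Then h is the graded Möbius transform of f, i.e. h(x) = Σ_{X ⊆ Σ with τ(x·Δ̂(X)) = τ(x)} (−1)^{|X|} f(x·Δ̂(X)) for every x ∈ Br_n, if and only if f(x) = Σ_{y ∈ Br_n with τ(x·y) = τ(x)} h(x·y) for every x ∈ Br_n (the latter being a finite sum, as {y : τ(x·y) = τ(x)} is finite). -/
open scoped Classical

namespace BraidMeasure

/-- Defining relations of the positive braid monoid on `n` strands,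
with Artin generators indexed by `Fin (n - 1)`. -/
inductive BraidRel (n : ℕ) :
    FreeMonoid (Fin (n - 1)) → FreeMonoid (Fin (n - 1)) → Prop
  | comm (i j : Fin (n - 1)) (h : (i : ℕ) + 2 ≤ (j : ℕ)) :
      BraidRel n (FreeMonoid.of i * FreeMonoid.of j)
        (FreeMonoid.of j * FreeMonoid.of i)
  | braid (i j : Fin (n - 1)) (h : (i : ℕ) + 1 = (j : ℕ)) :
      BraidRel n (FreeMonoid.of i * FreeMonoid.of j * FreeMonoid.of i)
        (FreeMonoid.of j * FreeMonoid.of i * FreeMonoid.of j)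

/-- The positive braid monoid `Br_n`, presented by the Artin relations. -/
def BraidMonoid (n : ℕ) : Type := (conGen (BraidRel n)).Quotient

instance (n : ℕ) : Monoid (BraidMonoid n) :=
  inferInstanceAs (Monoid (conGen (BraidRel n)).Quotient)

/-- The Artin generator `σ_{i+1}` of `Br_n`. -/
def gen {n : ℕ} (i : Fin (n - 1)) : BraidMonoid n :=
  (conGen (BraidRel n)).mk' (FreeMonoid.of i)

/-- Left divisibility: `x ≤_l y` iff `∃ z, y = x * z`. -/
def ldvd {n : ℕ} (x y : BraidMonoid n) : Prop := ∃ z, y = x * z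

/-- Right divisibility: `x ≤_r y` iff `∃ z, y = z * x`. -/
def rdvd {n : ℕ} (x y : BraidMonoid n) : Prop := ∃ z, y = z * x

/-- `σ_{i+1}` for a natural number index, with junk value `1` out of range. -/
def gen' {n : ℕ} (i : ℕ) : BraidMonoid n :=
  if h : i < n - 1 then gen ⟨i, h⟩ else 1

/-- The Garside element `Δ_n = (σ_1 ⋯ σ_{n-1})(σ_1 ⋯ σ_{n-2}) ⋯ (σ_1 σ_2) σ_1`. -/
def garside (n : ℕ) : BraidMonoid n :=
  ((List.range (n - 1)).map fun j =>
    ((List.range (n - 1 - j)).map fun i => (gen' i : BraidMonoid n)).prod).prod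

/-- The set of simple braids: left divisors of `Δ_n`. -/
def Simples (n : ℕ) : Set (BraidMonoid n) := {x | ldvd x (garside n)}

/-- `L(y) = {σ_i : σ_i ≤_l y}` (as a set of indices). -/
def Lset {n : ℕ} (y : BraidMonoid n) : Set (Fin (n - 1)) := {i | ldvd (gen i) y}

/-- `R(x) = {σ_i : x · σ_i ∉ S}` (as a set of indices). -/
def Rset {n : ℕ} (x : BraidMonoid n) : Set (Fin (n - 1)) :=
  {i | x * gen i ∉ Simples n}

/-- The relation `x → y` between simple braids: `L(y) ⊆ R(x)`. -/
def Arrow {n : ℕ} (x y : BraidMonoid n) : Prop := Lset y ⊆ Rset x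

/-- The Möbius polynomial of the positive braid monoid:
`H_0 = H_1 = 1`, `H_n = ∑_{k=1}^{n} (-1)^{k+1} t^{k(k-1)/2} H_{n-k}`. -/
noncomputable def mobiusH : ℕ → Polynomial ℤ
  | 0 => 1
  | 1 => 1
  | (n + 2) =>
      ∑ j ∈ Finset.range (n + 2),
        (-1 : Polynomial ℤ) ^ j * Polynomial.X ^ ((j + 1) * j / 2) * mobiusH (n + 1 - j)
  termination_by n => n
  decreasing_by omega

/-!
Both directions are one exchange of a double sum. Write `z = Δ̂(X) · y`: by the lub property
`Δ̂(X) ≤_l z` iff `X ⊆ L(z)`, the set of generators left-dividing `z`, and `y` is unique because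
`Br_n` is cancellative. Summing `(-1)^|X|` over `X ⊆ L(z)` gives `1` if `L(z) = ∅`, i.e. `z = 1`,
and `0` otherwise; symmetrically on the right with `z = y · Δ̂(X)`. The height `τ` only enters
through its monotonicity under `≤_l`, which makes `τ(x·a·b) = τ(x)` equivalent to
`τ(x·a) = τ(x)` and `τ(x·a·b) = τ(x·a)`, so the level sets `{y | τ(x·y) = τ(x)}` are stable
under these factorisations.

Cancellativity is Garside's: if `σ_i U ≡ σ_j V` for positive words then `U` and `V` factor through
`lcm(σ_i, σ_j)`, by induction on the length of `U` and, inside it, on the chain of relations.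
-/

section PowersetSum

open Finset Function

variable {ι M R : Type*} [Fintype ι]

theorem sum_sum_preimage_eq_sum_sum_powerset [AddCommMonoid R] (φ : Finset ι → M → M)
    (hφ : ∀ X, Injective (φ X)) (A : M → Finset ι)
    (hA : ∀ X z, z ∈ Set.range (φ X) ↔ X ⊆ A z) (S : Finset M) (F : Finset ι → M → R) :
    ∑ X, ∑ y ∈ S.preimage (φ X) (hφ X).injOn, F X (φ X y) =
      ∑ z ∈ S, ∑ X ∈ (A z).powerset, F X z := by
  simp_rw [sum_preimage', hA, sum_filter]
  rw [sum_comm]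
  refine sum_congr rfl fun z _ => ?_
  rw [← sum_filter, filter_subset_univ]

theorem sum_sum_preimage_neg_one_pow [One M] [Ring R] (φ : Finset ι → M → M)
    (hφ : ∀ X, Injective (φ X)) (A : M → Finset ι)
    (hA : ∀ X z, z ∈ Set.range (φ X) ↔ X ⊆ A z) (hA_one : ∀ z, A z = ∅ ↔ z = 1)
    {S : Finset M} (hS : 1 ∈ S) (g : M → R) :
    ∑ X, ∑ y ∈ S.preimage (φ X) (hφ X).injOn, (-1) ^ X.card * g (φ X y) = g 1 := by
  have hsign (z : M) : ∑ X ∈ (A z).powerset, (-1 : R) ^ X.card = if z = 1 then 1 else 0 := by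
    have := congrArg (Int.cast : ℤ → R) (sum_powerset_neg_one_pow_card (x := A z))
    push_cast at this
    simp only [this, hA_one]
  rw [sum_sum_preimage_eq_sum_sum_powerset φ hφ A hA S fun X z => (-1) ^ X.card * g z]
  simp_rw [← sum_mul, hsign, ite_mul, one_mul, zero_mul]
  rw [sum_ite_eq' S 1, if_pos hS]

end PowersetSum

section Height

open Finset

variable {M R : Type*} [Monoid M] {τ : M → ℕ}

theorem height_le_height_of_dvd (Δ : M) (hτ_pos : ∀ x, 1 ≤ τ x) (hτ_le : ∀ x, x ∣ Δ ^ τ x)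
    (hτ_min : ∀ x k, 1 ≤ k → x ∣ Δ ^ k → τ x ≤ k) {x y : M} (h : x ∣ y) : τ x ≤ τ y :=
  hτ_min x (τ y) (hτ_pos y) (h.trans (hτ_le y))

theorem height_mul_mul_eq_iff (hτ : ∀ x y, τ x ≤ τ (x * y)) {x a b : M} :
    τ (x * (a * b)) = τ x ↔ τ (x * a) = τ x ∧ τ (x * a * b) = τ (x * a) := by
  have := hτ x a
  have := hτ (x * a) b
  rw [← mul_assoc]
  omega

variable [AddCommMonoid R] {D : M → Finset M}

theorem sum_ite_height_mul_right [IsRightCancelMul M] (hτ : ∀ x y, τ x ≤ τ (x * y))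
    (hD : ∀ x y, y ∈ D x ↔ τ (x * y) = τ x) (x a : M) (u : M → R) :
    ∑ y ∈ D x, (if τ (x * y * a) = τ (x * y) then u (x * y * a) else 0) =
      ∑ y ∈ (D x).preimage (· * a) (mul_left_injective a).injOn, u (x * (y * a)) := by
  rw [← sum_filter]
  refine sum_congr ?_ fun y _ => by rw [mul_assoc]
  ext y
  simp only [mem_filter, mem_preimage, hD, height_mul_mul_eq_iff hτ]

theorem ite_height_mul_left [IsLeftCancelMul M] (hτ : ∀ x y, τ x ≤ τ (x * y))
    (hD : ∀ x y, y ∈ D x ↔ τ (x * y) = τ x) (x a : M) (u : M → R) :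
    (if τ (x * a) = τ x then ∑ y ∈ D (x * a), u (x * a * y) else 0) =
      ∑ y ∈ (D x).preimage (a * ·) (mul_right_injective a).injOn, u (x * (a * y)) := by
  split_ifs with hxa
  · refine sum_congr ?_ fun y _ => by rw [mul_assoc]
    ext y
    simp only [mem_preimage, hD, height_mul_mul_eq_iff hτ, hxa, true_and]
  · refine (sum_eq_zero fun y hy => absurd ?_ hxa).symm
    exact ((height_mul_mul_eq_iff hτ).1 ((hD x _).1 (mem_preimage.1 hy))).1

end Height

namespace Words

open Relation

variable {m : ℕ}

def Far (i j : Fin m) : Prop := (i : ℕ) + 2 ≤ j ∨ (j : ℕ) + 2 ≤ i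

def Adj (i j : Fin m) : Prop := (i : ℕ) + 1 = j ∨ (j : ℕ) + 1 = i

theorem Far.symm {i j : Fin m} (h : Far i j) : Far j i := Or.symm h

theorem Adj.symm {i j : Fin m} (h : Adj i j) : Adj j i := Or.symm h

theorem Far.ne {i j : Fin m} (h : Far i j) : i ≠ j := by
  rintro rfl; rcases h with h | h <;> omega

theorem Adj.ne {i j : Fin m} (h : Adj i j) : i ≠ j := by
  rintro rfl; rcases h with h | h <;> omega

theorem Far.not_adj {i j : Fin m} (h : Far i j) : ¬Adj i j := by
  rcases h with h | h <;> rintro (h' | h') <;> omega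

theorem Adj.not_adj_of_adj {i j k : Fin m} (hik : Adj i k) (hkj : Adj k j) : ¬Adj i j := by
  rcases hik with h | h <;> rcases hkj with h' | h' <;> rintro (h'' | h'') <;> omega

theorem eq_or_far_or_adj (i j : Fin m) : i = j ∨ Far i j ∨ Adj i j := by
  unfold Far Adj
  omega

inductive Step (m : ℕ) : List (Fin m) → List (Fin m) → Prop
  | comm (a b : List (Fin m)) {i j : Fin m} (h : Far i j) :
      Step m (a ++ i :: j :: b) (a ++ j :: i :: b)
  | braid (a b : List (Fin m)) {i j : Fin m} (h : Adj i j) :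
      Step m (a ++ i :: j :: i :: b) (a ++ j :: i :: j :: b)

theorem Step.symm {u v : List (Fin m)} : Step m u v → Step m v u
  | comm a b h => comm a b h.symm
  | braid a b h => braid a b h.symm

theorem Step.length_eq {u v : List (Fin m)} (h : Step m u v) : u.length = v.length := by
  cases h <;> simp

theorem Step.append_left {u v : List (Fin m)} (w : List (Fin m)) :
    Step m u v → Step m (w ++ u) (w ++ v)
  | comm a b h => by simpa using comm (w ++ a) b h
  | braid a b h => by simpa using braid (w ++ a) b h

theorem Step.append_right {u v : List (Fin m)} (w : List (Fin m)) :
    Step m u v → Step m (u ++ w) (v ++ w)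
  | comm a b h => by simpa using comm a (b ++ w) h
  | braid a b h => by simpa using braid a (b ++ w) h

theorem Step.reverse {u v : List (Fin m)} : Step m u v → Step m u.reverse v.reverse
  | comm a b h => by simpa using comm b.reverse a.reverse h.symm
  | braid a b h => by simpa using braid b.reverse a.reverse h

theorem Step.cons_cases {i : Fin m} {U v : List (Fin m)} (hs : Step m (i :: U) v) :
    (∃ U', Step m U U' ∧ v = i :: U') ∨
    (∃ q b, Far i q ∧ U = q :: b ∧ v = q :: i :: b) ∨
    (∃ q b, Adj i q ∧ U = q :: i :: b ∧ v = q :: i :: q :: b) := by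
  generalize hu : i :: U = u at hs
  cases hs with
  | comm a b h =>
    cases a with
    | nil =>
      obtain ⟨rfl, rfl⟩ := List.cons.inj hu
      exact .inr (.inl ⟨_, b, h, rfl, rfl⟩)
    | cons c a =>
      obtain ⟨rfl, rfl⟩ := List.cons.inj hu
      exact .inl ⟨_, comm a b h, rfl⟩
  | braid a b h =>
    cases a with
    | nil =>
      obtain ⟨rfl, rfl⟩ := List.cons.inj hu
      exact .inr (.inr ⟨_, b, h, rfl, rfl⟩)
    | cons c a =>
      obtain ⟨rfl, rfl⟩ := List.cons.inj hu
      exact .inl ⟨_, braid a b h, rfl⟩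

abbrev Eqv (m : ℕ) : List (Fin m) → List (Fin m) → Prop := ReflTransGen (Step m)

theorem Eqv.symm {u v : List (Fin m)} (h : Eqv m u v) : Eqv m v u := by
  induction h with
  | refl => rfl
  | tail _ hs ih => exact ih.head hs.symm

theorem Eqv.length_eq {u v : List (Fin m)} (h : Eqv m u v) : u.length = v.length := by
  induction h with
  | refl => rfl
  | tail _ hs ih => exact ih.trans hs.length_eq

theorem Eqv.append_left {u v : List (Fin m)} (w : List (Fin m)) (h : Eqv m u v) :
    Eqv m (w ++ u) (w ++ v) :=
  ReflTransGen.lift (w ++ ·) (fun _ _ => Step.append_left w) _ _ h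

theorem Eqv.append_right {u v : List (Fin m)} (w : List (Fin m)) (h : Eqv m u v) :
    Eqv m (u ++ w) (v ++ w) :=
  ReflTransGen.lift (· ++ w) (fun _ _ => Step.append_right w) _ _ h

theorem Eqv.reverse {u v : List (Fin m)} (h : Eqv m u v) : Eqv m u.reverse v.reverse :=
  ReflTransGen.lift List.reverse (fun _ _ => Step.reverse) _ _ h

theorem Eqv.comm (a b : List (Fin m)) {i j : Fin m} (h : Far i j) :
    Eqv m (a ++ i :: j :: b) (a ++ j :: i :: b) :=
  .single (.comm a b h)

theorem Eqv.braid (a b : List (Fin m)) {i j : Fin m} (h : Adj i j) :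
    Eqv m (a ++ i :: j :: i :: b) (a ++ j :: i :: j :: b) :=
  .single (.braid a b h)

/-- Garside's conclusion for `i :: U ≈ j :: V`: both words pass through the least common multiple
of `σ_i` and `σ_j`, which is `σ_i`, `σ_i σ_j` or `σ_i σ_j σ_i`. -/
structure FactorsThroughLcm (i j : Fin m) (U V : List (Fin m)) : Prop where
  eqv : i = j → Eqv m U V
  far : Far i j → ∃ Z, Eqv m U (j :: Z) ∧ Eqv m V (i :: Z)
  adj : Adj i j → ∃ Z, Eqv m U (j :: i :: Z) ∧ Eqv m V (i :: j :: Z)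

namespace FactorsThroughLcm

variable {i j q : Fin m} {U V : List (Fin m)}

theorem mk_eq (h : Eqv m U V) : FactorsThroughLcm i i U V :=
  ⟨fun _ => h, fun hF => absurd rfl hF.ne, fun hA => absurd rfl hA.ne⟩

theorem mk_far (hij : Far i j) (Z : List (Fin m)) (hU : Eqv m U (j :: Z))
    (hV : Eqv m V (i :: Z)) : FactorsThroughLcm i j U V :=
  ⟨fun he => absurd he hij.ne, fun _ => ⟨Z, hU, hV⟩, fun hA => absurd hA hij.not_adj⟩

theorem mk_adj (hij : Adj i j) (Z : List (Fin m)) (hU : Eqv m U (j :: i :: Z))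
    (hV : Eqv m V (i :: j :: Z)) : FactorsThroughLcm i j U V :=
  ⟨fun he => absurd he hij.ne, fun hF => absurd hij hF.not_adj, fun _ => ⟨Z, hU, hV⟩⟩

theorem eqv_left {U' : List (Fin m)} (hU : Eqv m U U') (C : FactorsThroughLcm i j U' V) :
    FactorsThroughLcm i j U V :=
  ⟨fun he => hU.trans (C.eqv he),
    fun hF => let ⟨Z, h1, h2⟩ := C.far hF; ⟨Z, hU.trans h1, h2⟩,
    fun hA => let ⟨Z, h1, h2⟩ := C.adj hA; ⟨Z, hU.trans h1, h2⟩⟩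

theorem eqv_right {V' : List (Fin m)} (hV : Eqv m V V') (C : FactorsThroughLcm i j U V') :
    FactorsThroughLcm i j U V :=
  ⟨fun he => (C.eqv he).trans hV.symm,
    fun hF => let ⟨Z, h1, h2⟩ := C.far hF; ⟨Z, h1, hV.trans h2⟩,
    fun hA => let ⟨Z, h1, h2⟩ := C.adj hA; ⟨Z, h1, hV.trans h2⟩⟩

theorem cons_far (hqi : Far q i) (hqj : Far q j) (C : FactorsThroughLcm i j U V) :
    FactorsThroughLcm i j (q :: U) (q :: V) := by
  refine ⟨fun he => (C.eqv he).append_left [q], fun hij => ?_, fun hij => ?_⟩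
  · obtain ⟨Z, hU, hV⟩ := C.far hij
    exact ⟨q :: Z, (hU.append_left [q]).trans (Eqv.comm [] Z hqj),
      (hV.append_left [q]).trans (Eqv.comm [] Z hqi)⟩
  · obtain ⟨Z, hU, hV⟩ := C.adj hij
    exact ⟨q :: Z,
      ((hU.append_left [q]).trans (Eqv.comm [] _ hqj)).trans (Eqv.comm [j] Z hqi),
      ((hV.append_left [q]).trans (Eqv.comm [] _ hqi)).trans (Eqv.comm [i] Z hqj)⟩

end FactorsThroughLcm

/-- Garside's lemma for words `U` of length less than `N`. -/
def LcmBelow (m N : ℕ) : Prop :=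
  ∀ ⦃i j : Fin m⦄ ⦃U V : List (Fin m)⦄, U.length < N → Eqv m (i :: U) (j :: V) →
    FactorsThroughLcm i j U V

section HeadCases

variable {i j q : Fin m} {b V W : List (Fin m)}

theorem factorsThroughLcm_of_comm_head_of_adj (hshort : LcmBelow m (b.length + 1)) (hiq : Far i q)
    (hqj : Adj q j) (hUW : Eqv m (i :: b) (j :: q :: W)) (hVW : Eqv m V (q :: j :: W)) :
    FactorsThroughLcm i j (q :: b) V := by
  have hW : W.length < b.length + 1 := by
    have := hUW.length_eq; simp only [List.length_cons] at this; omega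
  have C : FactorsThroughLcm i j b (q :: W) := hshort (by simp) hUW
  rcases eq_or_far_or_adj i j with rfl | hij | hij
  · exact absurd hqj hiq.symm.not_adj
  · obtain ⟨W2, h1, h2⟩ := C.far hij
    obtain ⟨W3, h3, h4⟩ := (hshort hW h2).far hiq.symm
    refine .mk_far hij (q :: j :: W3) ?_ ?_
    · calc Eqv m (q :: b) (q :: j :: W2) := h1.append_left [q]
        Eqv m _ (q :: j :: q :: W3) := h4.append_left [q, j]
        Eqv m _ (j :: q :: j :: W3) := Eqv.braid [] W3 hqj
    · calc Eqv m V (q :: j :: W) := hVW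
        Eqv m _ (q :: j :: i :: W3) := h3.append_left [q, j]
        Eqv m _ (q :: i :: j :: W3) := Eqv.comm [q] W3 hij.symm
        Eqv m _ (i :: q :: j :: W3) := Eqv.comm [] (j :: W3) hiq.symm
  · obtain ⟨W2, h1, h2⟩ := C.adj hij
    obtain ⟨W3, h3, h4⟩ := (hshort hW h2).far hiq.symm
    have hW2 : W2.length < b.length + 1 := by
      have := h2.length_eq; simp only [List.length_cons] at this; omega
    obtain ⟨W4, h5, h6⟩ := (hshort hW2 h4).adj hqj.symm
    refine .mk_adj hij (q :: j :: i :: W4) ?_ ?_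
    · calc Eqv m (q :: b) (q :: j :: i :: q :: j :: W4) :=
            (h1.append_left [q]).trans (h5.append_left [q, j, i])
        Eqv m _ (q :: j :: q :: i :: j :: W4) := Eqv.comm [q, j] (j :: W4) hiq
        Eqv m _ (j :: q :: j :: i :: j :: W4) := Eqv.braid [] (i :: j :: W4) hqj
        Eqv m _ (j :: q :: i :: j :: i :: W4) := Eqv.braid [j, q] W4 hij.symm
        Eqv m _ (j :: i :: q :: j :: i :: W4) := Eqv.comm [j] (j :: i :: W4) hiq.symm
    · calc Eqv m V (q :: j :: i :: j :: q :: W4) :=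
            (hVW.trans (h3.append_left [q, j])).trans (h6.append_left [q, j, i])
        Eqv m _ (q :: i :: j :: i :: q :: W4) := Eqv.braid [q] (q :: W4) hij.symm
        Eqv m _ (i :: q :: j :: i :: q :: W4) := Eqv.comm [] (j :: i :: q :: W4) hiq.symm
        Eqv m _ (i :: q :: j :: q :: i :: W4) := Eqv.comm [i, q, j] W4 hiq
        Eqv m _ (i :: j :: q :: j :: i :: W4) := Eqv.braid [i] (i :: W4) hqj

theorem factorsThroughLcm_of_comm_head (hshort : LcmBelow m (b.length + 1)) (hiq : Far i q)
    (C : FactorsThroughLcm q j (i :: b) V) : FactorsThroughLcm i j (q :: b) V := by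
  rcases eq_or_far_or_adj q j with rfl | hqj | hqj
  · exact .mk_far hiq b .refl (C.eqv rfl).symm
  · obtain ⟨W, hUW, hVW⟩ := C.far hqj
    exact ((hshort (by simp) hUW).cons_far hiq.symm hqj).eqv_right hVW
  · obtain ⟨W, hUW, hVW⟩ := C.adj hqj
    exact factorsThroughLcm_of_comm_head_of_adj hshort hiq hqj hUW hVW

theorem factorsThroughLcm_of_braid_head_of_far (hshort : LcmBelow m (b.length + 2)) (hiq : Adj i q)
    (hqj : Far q j) (hUW : Eqv m (i :: q :: b) (j :: W)) (hVW : Eqv m V (q :: W)) :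
    FactorsThroughLcm i j (q :: i :: b) V := by
  have C : FactorsThroughLcm i j (q :: b) W := hshort (by simp) hUW
  rcases eq_or_far_or_adj i j with rfl | hij | hij
  · exact absurd hiq hqj.symm.not_adj
  · obtain ⟨W2, h1, h2⟩ := C.far hij
    obtain ⟨W3, h3, h4⟩ := (hshort (by simp) h1).far hqj
    refine .mk_far hij (q :: i :: W3) ?_ ?_
    · calc Eqv m (q :: i :: b) (q :: i :: j :: W3) := h3.append_left [q, i]
        Eqv m _ (q :: j :: i :: W3) := Eqv.comm [q] W3 hij
        Eqv m _ (j :: q :: i :: W3) := Eqv.comm [] (i :: W3) hqj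
    · calc Eqv m V (q :: i :: q :: W3) :=
            (hVW.trans (h2.append_left [q])).trans (h4.append_left [q, i])
        Eqv m _ (i :: q :: i :: W3) := Eqv.braid [] W3 hiq.symm
  · obtain ⟨W2, h1, h2⟩ := C.adj hij
    obtain ⟨W3, h3, h4⟩ := (hshort (by simp) h1).far hqj
    have hW2 : W2.length < b.length + 2 := by
      have := h1.length_eq; simp only [List.length_cons] at this; omega
    obtain ⟨W4, h5, h6⟩ := (hshort hW2 h4).adj hiq
    refine .mk_adj hij (q :: i :: j :: W4) ?_ ?_
    · calc Eqv m (q :: i :: b) (q :: i :: j :: i :: q :: W4) :=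
            (h3.append_left [q, i]).trans (h6.append_left [q, i, j])
        Eqv m _ (q :: j :: i :: j :: q :: W4) := Eqv.braid [q] (q :: W4) hij
        Eqv m _ (j :: q :: i :: j :: q :: W4) := Eqv.comm [] (i :: j :: q :: W4) hqj
        Eqv m _ (j :: q :: i :: q :: j :: W4) := Eqv.comm [j, q, i] W4 hqj.symm
        Eqv m _ (j :: i :: q :: i :: j :: W4) := Eqv.braid [j] (j :: W4) hiq.symm
    · calc Eqv m V (q :: i :: j :: q :: i :: W4) :=
            ((hVW.trans (h2.append_left [q])).trans (h5.append_left [q, i, j]))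
        Eqv m _ (q :: i :: q :: j :: i :: W4) := Eqv.comm [q, i] (i :: W4) hqj.symm
        Eqv m _ (i :: q :: i :: j :: i :: W4) := Eqv.braid [] (j :: i :: W4) hiq.symm
        Eqv m _ (i :: q :: j :: i :: j :: W4) := Eqv.braid [i, q] W4 hij
        Eqv m _ (i :: j :: q :: i :: j :: W4) := Eqv.comm [i] (i :: j :: W4) hqj

theorem factorsThroughLcm_of_braid_head_of_adj (hshort : LcmBelow m (b.length + 2)) (hiq : Adj i q)
    (hqj : Adj q j) (hUW : Eqv m (i :: q :: b) (j :: q :: W)) (hVW : Eqv m V (q :: j :: W)) :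
    FactorsThroughLcm i j (q :: i :: b) V := by
  have C : FactorsThroughLcm i j (q :: b) (q :: W) := hshort (by simp) hUW
  have hW : W.length < b.length + 2 := by
    have := hUW.length_eq; simp only [List.length_cons] at this; omega
  rcases eq_or_far_or_adj i j with rfl | hij | hij
  · have hbW : Eqv m b W := (hshort (by simp) (C.eqv rfl)).eqv rfl
    exact .mk_eq ((hbW.append_left [q, i]).trans hVW.symm)
  · obtain ⟨W2, h1, h2⟩ := C.far hij
    obtain ⟨W3, h3, h4⟩ := (hshort (by simp) h1).adj hqj
    obtain ⟨W4, h5, h6⟩ := (hshort hW h2).adj hiq.symm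
    have hW3 : W3.length + 1 < b.length + 2 := by
      have := h3.length_eq; simp only [List.length_cons] at this; omega
    have h34 : Eqv m (j :: W3) (i :: W4) :=
      (hshort (by simpa using hW3) (h4.symm.trans h6)).eqv rfl
    obtain ⟨W5, h7, h8⟩ := (hshort (by omega) h34).far hij.symm
    refine .mk_far hij (q :: j :: i :: q :: W5) ?_ ?_
    · calc Eqv m (q :: i :: b) (q :: i :: j :: q :: i :: W5) :=
            (h3.append_left [q, i]).trans (h7.append_left [q, i, j, q])
        Eqv m _ (q :: j :: i :: q :: i :: W5) := Eqv.comm [q] (q :: i :: W5) hij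
        Eqv m _ (q :: j :: q :: i :: q :: W5) := Eqv.braid [q, j] W5 hiq
        Eqv m _ (j :: q :: j :: i :: q :: W5) := Eqv.braid [] (i :: q :: W5) hqj
    · calc Eqv m V (q :: j :: i :: q :: j :: W5) :=
            (hVW.trans (h5.append_left [q, j])).trans (h8.append_left [q, j, i, q])
        Eqv m _ (q :: i :: j :: q :: j :: W5) := Eqv.comm [q] (q :: j :: W5) hij.symm
        Eqv m _ (q :: i :: q :: j :: q :: W5) := Eqv.braid [q, i] W5 hqj.symm
        Eqv m _ (i :: q :: i :: j :: q :: W5) := Eqv.braid [] (j :: q :: W5) hiq.symm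
        Eqv m _ (i :: q :: j :: i :: q :: W5) := Eqv.comm [i, q] (q :: W5) hij
  · exact absurd hij (hiq.not_adj_of_adj hqj)

theorem factorsThroughLcm_of_braid_head (hshort : LcmBelow m (b.length + 2)) (hiq : Adj i q)
    (C : FactorsThroughLcm q j (i :: q :: b) V) : FactorsThroughLcm i j (q :: i :: b) V := by
  rcases eq_or_far_or_adj q j with rfl | hqj | hqj
  · exact .mk_adj hiq b .refl (C.eqv rfl).symm
  · obtain ⟨W, hUW, hVW⟩ := C.far hqj
    exact factorsThroughLcm_of_braid_head_of_far hshort hiq hqj hUW hVW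
  · obtain ⟨W, hUW, hVW⟩ := C.adj hqj
    exact factorsThroughLcm_of_braid_head_of_adj hshort hiq hqj hUW hVW

end HeadCases

theorem LcmBelow.succ {N : ℕ} (hN : LcmBelow m N) : LcmBelow m (N + 1) := by
  intro i j U V hU hE
  rcases Nat.lt_succ_iff_lt_or_eq.1 hU with hU | hU
  · exact hN hU hE
  suffices ∀ w, Eqv m w (j :: V) → ∀ i U, w = i :: U → U.length = N →
      FactorsThroughLcm i j U V from this _ hE i U rfl hU
  intro w hw
  induction hw using ReflTransGen.head_induction_on with
  | refl =>
    rintro i U h -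
    obtain ⟨rfl, rfl⟩ := List.cons.inj h
    exact .mk_eq .refl
  | head hs _ ih =>
    rintro i U rfl hU
    rcases hs.cons_cases with ⟨U', hs', rfl⟩ | ⟨q, b, hiq, rfl, rfl⟩ | ⟨q, b, hiq, rfl, rfl⟩
    · exact (ih i U' rfl (hs'.length_eq ▸ hU)).eqv_left (.single hs')
    · subst hU
      exact factorsThroughLcm_of_comm_head hN hiq (ih q (i :: b) rfl rfl)
    · subst hU
      exact factorsThroughLcm_of_braid_head hN hiq (ih q (i :: q :: b) rfl rfl)

theorem lcmBelow (N : ℕ) : LcmBelow m N := by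
  induction N with
  | zero => exact fun _ _ _ _ hU => absurd hU (Nat.not_lt_zero _)
  | succ N ih => exact ih.succ

theorem Eqv.of_cons {i : Fin m} {U V : List (Fin m)} (h : Eqv m (i :: U) (i :: V)) :
    Eqv m U V :=
  (lcmBelow _ (Nat.lt_succ_self _) h).eqv rfl

theorem Eqv.of_append_singleton {i : Fin m} {U V : List (Fin m)}
    (h : Eqv m (U ++ [i]) (V ++ [i])) : Eqv m U V := by
  have h' : Eqv m (i :: U.reverse) (i :: V.reverse) := by simpa using h.reverse
  simpa only [List.reverse_reverse] using h'.of_cons.reverse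

def eqvCon (m : ℕ) : Con (FreeMonoid (Fin m)) where
  r u v := Eqv m u.toList v.toList
  iseqv := ⟨fun _ => .refl, Eqv.symm, ReflTransGen.trans⟩
  mul' h h' := (h.append_right _).trans (h'.append_left _)

end Words

namespace BraidMonoid

open Words

variable {n : ℕ}

def ofWord (l : List (Fin (n - 1))) : BraidMonoid n :=
  (conGen (BraidRel n)).mk' (FreeMonoid.ofList l)

theorem ofWord_nil : (ofWord [] : BraidMonoid n) = 1 := rfl

theorem ofWord_append (u v : List (Fin (n - 1))) :
    (ofWord (u ++ v) : BraidMonoid n) = ofWord u * ofWord v := rfl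

theorem ofWord_surjective : Function.Surjective (ofWord : List (Fin (n - 1)) → BraidMonoid n) :=
  fun x => (Con.mk'_surjective x).imp fun _ hw => hw

theorem ofWord_eq_of_step {u v : List (Fin (n - 1))} (h : Step (n - 1) u v) :
    (ofWord u : BraidMonoid n) = ofWord v := by
  have hrel : ∀ {x y : FreeMonoid (Fin (n - 1))}, BraidRel n x y ∨ BraidRel n y x →
      (conGen (BraidRel n)).mk' x = (conGen (BraidRel n)).mk' y := fun h =>
    (conGen (BraidRel n)).eq.2 (h.elim (ConGen.Rel.of _ _) fun h => (ConGen.Rel.of _ _ h).symm)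
  cases h with
  | @comm a b i j h =>
    rw [show a ++ i :: j :: b = a ++ [i, j] ++ b by simp,
      show a ++ j :: i :: b = a ++ [j, i] ++ b by simp, ofWord_append, ofWord_append a,
      ofWord_append, ofWord_append a]
    congr 2
    exact hrel (h.imp (BraidRel.comm _ _) (BraidRel.comm _ _))
  | @braid a b i j h =>
    rw [show a ++ i :: j :: i :: b = a ++ [i, j, i] ++ b by simp,
      show a ++ j :: i :: j :: b = a ++ [j, i, j] ++ b by simp, ofWord_append, ofWord_append a,
      ofWord_append, ofWord_append a]
    congr 2
    exact hrel (h.imp (BraidRel.braid _ _) (BraidRel.braid _ _))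

theorem ofWord_eq_ofWord_iff {u v : List (Fin (n - 1))} :
    (ofWord u : BraidMonoid n) = ofWord v ↔ Eqv (n - 1) u v := by
  refine ⟨fun h => ?_, fun h => ?_⟩
  · refine (Con.conGen_le (c := eqvCon (n - 1))).2 (fun x y hxy => ?_)
      ((conGen (BraidRel n)).eq.1 h)
    cases hxy with
    | comm i j h => exact Eqv.comm [] [] (Or.inl h)
    | braid i j h => exact Eqv.braid [] [] (Or.inl h)
  · induction h with
    | refl => rfl
    | tail _ hs ih => exact ih.trans (ofWord_eq_of_step hs)

theorem isLeftRegular_gen (i : Fin (n - 1)) : IsLeftRegular (gen i : BraidMonoid n) := by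
  intro x y h
  obtain ⟨u, rfl⟩ := ofWord_surjective x
  obtain ⟨v, rfl⟩ := ofWord_surjective y
  have h : Eqv (n - 1) (i :: u) (i :: v) := ofWord_eq_ofWord_iff.1 h
  exact ofWord_eq_ofWord_iff.2 h.of_cons

theorem isRightRegular_gen (i : Fin (n - 1)) : IsRightRegular (gen i : BraidMonoid n) := by
  intro x y h
  obtain ⟨u, rfl⟩ := ofWord_surjective x
  obtain ⟨v, rfl⟩ := ofWord_surjective y
  have h : Eqv (n - 1) (u ++ [i]) (v ++ [i]) := ofWord_eq_ofWord_iff.1 h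
  exact ofWord_eq_ofWord_iff.2 h.of_append_singleton

instance : IsLeftCancelMul (BraidMonoid n) where
  mul_left_cancel a := by
    obtain ⟨l, rfl⟩ := ofWord_surjective a
    induction l with
    | nil => exact isRegular_one.left
    | cons i l ih => exact (isLeftRegular_gen i).mul ih

instance : IsRightCancelMul (BraidMonoid n) where
  mul_right_cancel a := by
    obtain ⟨l, rfl⟩ := ofWord_surjective a
    induction l with
    | nil => exact isRegular_one.right
    | cons i l ih => exact (isRightRegular_gen i).mul ih

theorem ofWord_eq_one_iff {l : List (Fin (n - 1))} : (ofWord l : BraidMonoid n) = 1 ↔ l = [] :=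
  ⟨fun h => List.eq_nil_of_length_eq_zero (ofWord_eq_ofWord_iff.1 h).length_eq,
    fun h => h ▸ ofWord_nil⟩

noncomputable def leftAtoms (z : BraidMonoid n) : Finset (Fin (n - 1)) := {i | ldvd (gen i) z}

noncomputable def rightAtoms (z : BraidMonoid n) : Finset (Fin (n - 1)) := {i | rdvd (gen i) z}

theorem leftAtoms_eq_empty_iff {z : BraidMonoid n} : leftAtoms z = ∅ ↔ z = 1 := by
  obtain ⟨l, rfl⟩ := ofWord_surjective z
  simp only [leftAtoms, Finset.filter_eq_empty_iff, Finset.mem_univ, true_implies,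
    ofWord_eq_one_iff]
  cases l with
  | nil =>
    refine iff_of_true (fun i ⟨w, hw⟩ => ?_) rfl
    obtain ⟨t, rfl⟩ := ofWord_surjective w
    exact List.cons_ne_nil i t (ofWord_eq_one_iff.1 hw.symm)
  | cons i t => exact iff_of_false (fun h => @h i ⟨ofWord t, rfl⟩) (List.cons_ne_nil i t)

theorem rightAtoms_eq_empty_iff {z : BraidMonoid n} : rightAtoms z = ∅ ↔ z = 1 := by
  obtain ⟨l, rfl⟩ := ofWord_surjective z
  simp only [rightAtoms, Finset.filter_eq_empty_iff, Finset.mem_univ, true_implies,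
    ofWord_eq_one_iff]
  rcases l.eq_nil_or_concat' with rfl | ⟨t, i, rfl⟩
  · refine iff_of_true (fun i ⟨w, hw⟩ => ?_) rfl
    obtain ⟨t, rfl⟩ := ofWord_surjective w
    simpa using ofWord_eq_one_iff.1 (hw.symm : ofWord (t ++ [i]) = 1)
  · exact iff_of_false (fun h => @h i ⟨ofWord t, rfl⟩) (by simp)

def IsLeftLub (X : Finset (Fin (n - 1))) (d : BraidMonoid n) : Prop :=
  (∀ i ∈ X, ldvd (gen i) d) ∧ ∀ z, (∀ i ∈ X, ldvd (gen i) z) → ldvd d z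

def IsRightLub (X : Finset (Fin (n - 1))) (d : BraidMonoid n) : Prop :=
  (∀ i ∈ X, rdvd (gen i) d) ∧ ∀ z, (∀ i ∈ X, rdvd (gen i) z) → rdvd d z

theorem mem_range_mul_left_iff {X : Finset (Fin (n - 1))} {d z : BraidMonoid n}
    (hd : IsLeftLub X d) :
    z ∈ Set.range (d * ·) ↔ X ⊆ leftAtoms z := by
  simp only [Set.mem_range, Finset.subset_iff, leftAtoms, Finset.mem_filter, Finset.mem_univ,
    true_and]
  refine ⟨?_, fun h => (hd.2 z h).imp fun y hy => hy.symm⟩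
  rintro ⟨y, rfl⟩ i hi
  obtain ⟨c, hc⟩ := hd.1 i hi
  exact ⟨c * y, by rw [hc, mul_assoc]⟩

theorem mem_range_mul_right_iff {X : Finset (Fin (n - 1))} {d z : BraidMonoid n}
    (hd : IsRightLub X d) :
    z ∈ Set.range (· * d) ↔ X ⊆ rightAtoms z := by
  simp only [Set.mem_range, Finset.subset_iff, rightAtoms, Finset.mem_filter, Finset.mem_univ,
    true_and]
  refine ⟨?_, fun h => (hd.2 z h).imp fun y hy => hy.symm⟩
  rintro ⟨y, rfl⟩ i hi
  obtain ⟨c, hc⟩ := hd.1 i hi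
  exact ⟨y * c, by rw [hc, mul_assoc]⟩

variable {R : Type*} [Ring R] {Δhat : Finset (Fin (n - 1)) → BraidMonoid n}
  {S : Finset (BraidMonoid n)}

theorem sum_preimage_mul_left_neg_one_pow (hlub : ∀ X, IsLeftLub X (Δhat X)) (hS : 1 ∈ S)
    (g : BraidMonoid n → R) :
    ∑ X, ∑ y ∈ S.preimage (Δhat X * ·) (mul_right_injective _).injOn,
      (-1) ^ X.card * g (Δhat X * y) = g 1 :=
  sum_sum_preimage_neg_one_pow _ (fun _ => mul_right_injective _) leftAtoms
    (fun X _ => mem_range_mul_left_iff (hlub X)) (fun _ => leftAtoms_eq_empty_iff) hS g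

theorem sum_preimage_mul_right_neg_one_pow (hlub : ∀ X, IsRightLub X (Δhat X)) (hS : 1 ∈ S)
    (g : BraidMonoid n → R) :
    ∑ X, ∑ y ∈ S.preimage (· * Δhat X) (mul_left_injective _).injOn,
      (-1) ^ X.card * g (y * Δhat X) = g 1 :=
  sum_sum_preimage_neg_one_pow _ (fun _ => mul_left_injective _) rightAtoms
    (fun X _ => mem_range_mul_right_iff (hlub X)) (fun _ => rightAtoms_eq_empty_iff) hS g

end BraidMonoid

open Finset BraidMonoid in
theorem graded_mobius_inversion_general (n : ℕ)
    (Δhat : Finset (Fin (n - 1)) → BraidMonoid n)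
    (hlub_l : ∀ X : Finset (Fin (n - 1)),
      (∀ i ∈ X, ldvd (gen i) (Δhat X)) ∧
        ∀ z : BraidMonoid n, (∀ i ∈ X, ldvd (gen i) z) → ldvd (Δhat X) z)
    (hlub_r : ∀ X : Finset (Fin (n - 1)),
      (∀ i ∈ X, rdvd (gen i) (Δhat X)) ∧
        ∀ z : BraidMonoid n, (∀ i ∈ X, rdvd (gen i) z) → rdvd (Δhat X) z)
    (τ : BraidMonoid n → ℕ)
    (hτ_pos : ∀ x : BraidMonoid n, 1 ≤ τ x)
    (hτ_le : ∀ x : BraidMonoid n, ldvd x (garside n ^ τ x))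
    (hτ_min : ∀ (x : BraidMonoid n) (k : ℕ), 1 ≤ k → ldvd x (garside n ^ k) → τ x ≤ k)
    (f h : BraidMonoid n → ℝ)
    (hfin : ∀ x : BraidMonoid n, {y : BraidMonoid n | τ (x * y) = τ x}.Finite) :
    (∀ x : BraidMonoid n, h x = ∑ X : Finset (Fin (n - 1)),
        if τ (x * Δhat X) = τ x then (-1 : ℝ) ^ X.card * f (x * Δhat X) else 0) ↔
      (∀ x : BraidMonoid n, f x = ∑ y ∈ (hfin x).toFinset, h (x * y)) := by
  have hτ (x y : BraidMonoid n) : τ x ≤ τ (x * y) :=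
    height_le_height_of_dvd (garside n) hτ_pos hτ_le hτ_min (dvd_mul_right x y)
  have hD (x y : BraidMonoid n) : y ∈ (hfin x).toFinset ↔ τ (x * y) = τ x :=
    Set.Finite.mem_toFinset _
  have hone (x : BraidMonoid n) : 1 ∈ (hfin x).toFinset := (hD x 1).2 (by rw [mul_one])
  constructor
  · intro H x
    calc f x = f (x * 1) := by rw [mul_one]
      _ = ∑ X, ∑ y ∈ (hfin x).toFinset.preimage (· * Δhat X) (mul_left_injective _).injOn,
            (-1) ^ X.card * f (x * (y * Δhat X)) :=
        (sum_preimage_mul_right_neg_one_pow hlub_r (hone x) fun z => f (x * z)).symm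
      _ = ∑ X, ∑ y ∈ (hfin x).toFinset, if τ (x * y * Δhat X) = τ (x * y)
            then (-1) ^ X.card * f (x * y * Δhat X) else 0 :=
        sum_congr rfl fun X _ =>
          (sum_ite_height_mul_right hτ hD x (Δhat X) fun z => (-1) ^ X.card * f z).symm
      _ = ∑ y ∈ (hfin x).toFinset, h (x * y) := by rw [sum_comm]; simp only [H]
  · intro G x
    calc h x = h (x * 1) := by rw [mul_one]
      _ = ∑ X, ∑ y ∈ (hfin x).toFinset.preimage (Δhat X * ·) (mul_right_injective _).injOn,
            (-1) ^ X.card * h (x * (Δhat X * y)) :=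
        (sum_preimage_mul_left_neg_one_pow hlub_l (hone x) fun z => h (x * z)).symm
      _ = ∑ X, if τ (x * Δhat X) = τ x then ∑ y ∈ (hfin (x * Δhat X)).toFinset,
            (-1) ^ X.card * h (x * Δhat X * y) else 0 :=
        sum_congr rfl fun X _ =>
          (ite_height_mul_left hτ hD x (Δhat X) fun z => (-1) ^ X.card * h z).symm
      _ = _ := by simp only [G, mul_sum]

/-- Graded Möbius inversion on `Br_n`: `h` is the graded Möbius
transform of `f` iff `f(x) = Σ_{y, τ(x·y) = τ(x)} h(x·y)` for every `x`. -/
theorem graded_mobius_inversion (n : ℕ) (hn : 2 ≤ n)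
    (Δhat : Finset (Fin (n - 1)) → BraidMonoid n)
    (hlub_l : ∀ X : Finset (Fin (n - 1)),
      (∀ i ∈ X, ldvd (gen i) (Δhat X)) ∧
        ∀ z : BraidMonoid n, (∀ i ∈ X, ldvd (gen i) z) → ldvd (Δhat X) z)
    (hlub_r : ∀ X : Finset (Fin (n - 1)),
      (∀ i ∈ X, rdvd (gen i) (Δhat X)) ∧
        ∀ z : BraidMonoid n, (∀ i ∈ X, rdvd (gen i) z) → rdvd (Δhat X) z)
    (τ : BraidMonoid n → ℕ)
    (hτ_pos : ∀ x : BraidMonoid n, 1 ≤ τ x)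
    (hτ_le : ∀ x : BraidMonoid n, ldvd x (garside n ^ τ x))
    (hτ_min : ∀ (x : BraidMonoid n) (k : ℕ), 1 ≤ k → ldvd x (garside n ^ k) → τ x ≤ k)
    (f h : BraidMonoid n → ℝ)
    (hfin : ∀ x : BraidMonoid n, {y : BraidMonoid n | τ (x * y) = τ x}.Finite) :
    (∀ x : BraidMonoid n, h x = ∑ X : Finset (Fin (n - 1)),
        if τ (x * Δhat X) = τ x then (-1 : ℝ) ^ X.card * f (x * Δhat X) else 0) ↔
      (∀ x : BraidMonoid n, f x = ∑ y ∈ (hfin x).toFinset, h (x * y)) :=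
  graded_mobius_inversion_general n Δhat hlub_l hlub_r τ hτ_pos hτ_le hτ_min f h hfin

end BraidMeasure
end

section
/- Let p ≥ 0 be a real number and let w : Br_n → ℝ be a nonnegative summable function such that for every x ∈ Br_n, Σ_{y ∈ Br_n with x ≤_l y} w(y) = p^{ℓ(x)}. Then for every x ∈ Br_n, w(x) = p^{ℓ(x)} · Σ_{X ⊆ Σ} (−1)^{|X|} p^{ℓ(Δ̂(X))}. (In other words, any uniform weight of parameter p on Br_n is given on singletons by the inclusion–exclusion formula w(x) = H_n(p)·p^{ℓ(x)}.) -/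
/-!
Everything rests on Garside's theorem that `Br_n` is left cancellative. On words one shows, by
induction on the length and inside it along a derivation, that `a·u ≡ b·v` forces `u ≡ v` if
`a = b`, `u ≡ b·w` and `v ≡ a·w` if `a, b` commute, and `u ≡ ba·w` and `v ≡ ab·w` if they are
adjacent; a derivation step that rewrites the first letter is absorbed by applying the induction
hypothesis to shorter words up to three times.

With cancellation and the lub property, `x·Δ̂(X) ≤_l x·z` iff `X ⊆ L(z) = {i | σ_i ≤_l z}`, so
`∑_X (-1)^|X| 1[x·Δ̂(X) ≤_l y]` is the indicator of `y = x`: the alternating sum over the subsets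
of `L(z)` vanishes unless `L(z) = ∅`, that is `z = 1`. Summing this identity against `w` and
exchanging the finite sum with the series turns the cylinder masses
`p^ℓ(x·Δ̂(X)) = p^ℓ(x) · p^ℓ(Δ̂(X))` into the formula.
-/

open scoped Classical

namespace BraidMeasure

section Words

variable {m : ℕ}

def Distant (a b : Fin m) : Prop := (a : ℕ) + 2 ≤ b ∨ (b : ℕ) + 2 ≤ a

def Adjacent (a b : Fin m) : Prop := (a : ℕ) + 1 = b ∨ (b : ℕ) + 1 = a

theorem Distant.symm {a b : Fin m} (h : Distant a b) : Distant b a := Or.symm h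

theorem Adjacent.symm {a b : Fin m} (h : Adjacent a b) : Adjacent b a := Or.symm h

theorem Adjacent.not_distant {a b : Fin m} (h : Adjacent a b) : ¬Distant a b := by
  unfold Adjacent Distant at *
  omega

inductive Step : List (Fin m) → List (Fin m) → Prop
  | swap {a b : Fin m} (h : Distant a b) (t : List (Fin m)) : Step (a :: b :: t) (b :: a :: t)
  | braid {a b : Fin m} (h : Adjacent a b) (t : List (Fin m)) :
      Step (a :: b :: a :: t) (b :: a :: b :: t)
  | cons (x : Fin m) {u v : List (Fin m)} : Step u v → Step (x :: u) (x :: v)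

namespace Step

variable {u v : List (Fin m)}

theorem symm (h : Step u v) : Step v u := by
  induction h with
  | swap h t => exact swap h.symm t
  | braid h t => exact braid h.symm t
  | cons x _ ih => exact cons x ih

theorem length_eq (h : Step u v) : u.length = v.length := by
  induction h <;> simp [*]

theorem append_left (l : List (Fin m)) (h : Step u v) : Step (l ++ u) (l ++ v) := by
  induction l with
  | nil => exact h
  | cons x l ih => exact cons x ih

theorem append_right (r : List (Fin m)) (h : Step u v) : Step (u ++ r) (v ++ r) := by
  induction h with
  | swap h t => exact swap h (t ++ r)
  | braid h t => exact braid h (t ++ r)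
  | cons x _ ih => exact cons x ih

end Step

def WordEquiv : List (Fin m) → List (Fin m) → Prop := Relation.ReflTransGen Step

infix:50 " ≈ᵇ " => WordEquiv

namespace WordEquiv

variable {u v w u' v' : List (Fin m)}

@[refl] theorem refl (u : List (Fin m)) : u ≈ᵇ u := Relation.ReflTransGen.refl

theorem single (h : Step u v) : u ≈ᵇ v := Relation.ReflTransGen.single h

theorem trans (h₁ : u ≈ᵇ v) (h₂ : v ≈ᵇ w) : u ≈ᵇ w :=
  Relation.ReflTransGen.trans h₁ h₂

instance : @Trans (List (Fin m)) (List (Fin m)) (List (Fin m)) WordEquiv WordEquiv WordEquiv :=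
  ⟨trans⟩

theorem symm (h : u ≈ᵇ v) : v ≈ᵇ u := by
  induction h with
  | refl => rfl
  | tail _ hs ih => exact (single hs.symm).trans ih

theorem length_eq (h : u ≈ᵇ v) : u.length = v.length := by
  induction h with
  | refl => rfl
  | tail _ hs ih => exact ih.trans hs.length_eq

theorem append_left (l : List (Fin m)) (h : u ≈ᵇ v) : l ++ u ≈ᵇ l ++ v :=
  Relation.ReflTransGen.lift (l ++ ·) (fun _ _ hs => Step.append_left l hs) _ _ h

theorem cons (x : Fin m) (h : u ≈ᵇ v) : x :: u ≈ᵇ x :: v := h.append_left [x]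

theorem append (h : u ≈ᵇ u') (h' : v ≈ᵇ v') : u ++ v ≈ᵇ u' ++ v' :=
  (Relation.ReflTransGen.lift (· ++ v) (fun _ _ hs => Step.append_right v hs) _ _ h).trans
    (h'.append_left u')

theorem swap {a b : Fin m} (h : Distant a b) (t : List (Fin m)) : a :: b :: t ≈ᵇ b :: a :: t :=
  single (.swap h t)

theorem braid {a b : Fin m} (h : Adjacent a b) (t : List (Fin m)) :
    a :: b :: a :: t ≈ᵇ b :: a :: b :: t :=
  single (.braid h t)

end WordEquiv

/-- Garside's analysis of `a :: u ≈ᵇ b :: v`: both sides are equivalent to a word starting with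
the lcm of `a` and `b`, namely `a`, `ab = ba` or `aba = bab`. -/
def FactorsThroughLcm (a b : Fin m) (u v : List (Fin m)) : Prop :=
  (a = b ∧ u ≈ᵇ v) ∨
  (Distant a b ∧ ∃ w, u ≈ᵇ b :: w ∧ v ≈ᵇ a :: w) ∨
  (Adjacent a b ∧ ∃ w, u ≈ᵇ b :: a :: w ∧ v ≈ᵇ a :: b :: w)

namespace FactorsThroughLcm

variable {a b : Fin m} {u u' v : List (Fin m)}

theorem of_eq (h : FactorsThroughLcm a a u v) : u ≈ᵇ v := by
  rcases h with ⟨-, h⟩ | ⟨hd, -⟩ | ⟨ha, -⟩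
  · exact h
  · unfold Distant at hd; omega
  · unfold Adjacent at ha; omega

theorem of_distant (hab : Distant a b) (h : FactorsThroughLcm a b u v) :
    ∃ w, u ≈ᵇ b :: w ∧ v ≈ᵇ a :: w := by
  rcases h with ⟨rfl, -⟩ | ⟨-, h⟩ | ⟨ha, -⟩
  · unfold Distant at hab; omega
  · exact h
  · exact absurd hab ha.not_distant

theorem of_adjacent (hab : Adjacent a b) (h : FactorsThroughLcm a b u v) :
    ∃ w, u ≈ᵇ b :: a :: w ∧ v ≈ᵇ a :: b :: w := by
  rcases h with ⟨rfl, -⟩ | ⟨hd, -⟩ | ⟨-, h⟩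
  · unfold Adjacent at hab; omega
  · exact absurd hd hab.not_distant
  · exact h

theorem congr_left (hu : u ≈ᵇ u') (h : FactorsThroughLcm a b u' v) :
    FactorsThroughLcm a b u v := by
  rcases h with ⟨hab, h⟩ | ⟨hab, w, h, hv⟩ | ⟨hab, w, h, hv⟩
  · exact .inl ⟨hab, hu.trans h⟩
  · exact .inr (.inl ⟨hab, w, hu.trans h, hv⟩)
  · exact .inr (.inr ⟨hab, w, hu.trans h, hv⟩)

end FactorsThroughLcm

def FactorsThroughLcmBelow (m N : ℕ) : Prop :=
  ∀ (a b : Fin m) (u v : List (Fin m)),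
    u.length < N → a :: u ≈ᵇ b :: v → FactorsThroughLcm a b u v

namespace FactorsThroughLcmBelow

variable {N : ℕ} {a b c : Fin m} {t u v w : List (Fin m)}

theorem cancel (ih : FactorsThroughLcmBelow m N) (hu : u.length < N) (h : a :: u ≈ᵇ a :: v) :
    u ≈ᵇ v :=
  (ih a a u v hu h).of_eq

theorem distant (ih : FactorsThroughLcmBelow m N) (hu : u.length < N) (hab : Distant a b)
    (h : a :: u ≈ᵇ b :: v) :
    ∃ w, u ≈ᵇ b :: w ∧ v ≈ᵇ a :: w :=
  (ih a b u v hu h).of_distant hab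

theorem adjacent (ih : FactorsThroughLcmBelow m N) (hu : u.length < N) (hab : Adjacent a b)
    (h : a :: u ≈ᵇ b :: v) :
    ∃ w, u ≈ᵇ b :: a :: w ∧ v ≈ᵇ a :: b :: w :=
  (ih a b u v hu h).of_adjacent hab

theorem swap_head_of_distant (ih : FactorsThroughLcmBelow m N) (hac : Distant a c)
    (hcb : Distant c b) (ht : t.length < N) (h₁ : a :: t ≈ᵇ b :: w) (h₂ : v ≈ᵇ c :: w) :
    FactorsThroughLcm a b (c :: t) v := by
  rcases ih a b t w ht h₁ with ⟨rfl, h⟩ | ⟨hab, s, hs, hw⟩ | ⟨hab, s, hs, hw⟩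
  · exact .inl ⟨rfl, (h.cons c).trans h₂.symm⟩
  · refine .inr (.inl ⟨hab, c :: s, ?_, ?_⟩)
    · calc c :: t ≈ᵇ c :: b :: s := hs.cons c
        _ ≈ᵇ b :: c :: s := .swap hcb s
    · calc v ≈ᵇ c :: w := h₂
        _ ≈ᵇ c :: a :: s := hw.cons c
        _ ≈ᵇ a :: c :: s := .swap hac.symm s
  · refine .inr (.inr ⟨hab, c :: s, ?_, ?_⟩)
    · calc c :: t ≈ᵇ c :: b :: a :: s := hs.cons c
        _ ≈ᵇ b :: c :: a :: s := .swap hcb _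
        _ ≈ᵇ b :: a :: c :: s := (WordEquiv.swap hac.symm s).cons b
    · calc v ≈ᵇ c :: w := h₂
        _ ≈ᵇ c :: a :: b :: s := hw.cons c
        _ ≈ᵇ a :: c :: b :: s := .swap hac.symm _
        _ ≈ᵇ a :: b :: c :: s := (WordEquiv.swap hcb s).cons a

theorem swap_head_of_adjacent (ih : FactorsThroughLcmBelow m N) (hac : Distant a c)
    (hcb : Adjacent c b) (ht : t.length < N) (h₁ : a :: t ≈ᵇ b :: c :: w)
    (h₂ : v ≈ᵇ c :: b :: w) : FactorsThroughLcm a b (c :: t) v := by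
  have hw : w.length < N := by
    have := h₁.length_eq; simp only [List.length_cons] at this; omega
  rcases ih a b t (c :: w) ht h₁ with ⟨rfl, -⟩ | ⟨hab, s, hs, hcw⟩ | ⟨hab, s, hs, hcw⟩
  · exact absurd hac hcb.symm.not_distant
  · obtain ⟨r, hwr, hsr⟩ := ih.distant hw hac.symm hcw
    refine .inr (.inl ⟨hab, c :: b :: r, ?_, ?_⟩)
    · calc c :: t ≈ᵇ c :: b :: s := hs.cons c
        _ ≈ᵇ c :: b :: c :: r := hsr.append_left [c, b]
        _ ≈ᵇ b :: c :: b :: r := .braid hcb r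
    · calc v ≈ᵇ c :: b :: w := h₂
        _ ≈ᵇ c :: b :: a :: r := hwr.append_left [c, b]
        _ ≈ᵇ c :: a :: b :: r := (WordEquiv.swap hab.symm r).cons c
        _ ≈ᵇ a :: c :: b :: r := .swap hac.symm _
  · obtain ⟨r, hwr, hsr⟩ := ih.distant hw hac.symm hcw
    have hs_len : s.length < N := by
      have := hs.length_eq; simp only [List.length_cons] at this; omega
    obtain ⟨q, hsq, hrq⟩ := ih.adjacent hs_len hcb.symm hsr
    refine .inr (.inr ⟨hab, c :: b :: a :: q, ?_, ?_⟩)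
    · calc c :: t ≈ᵇ c :: b :: a :: s := hs.cons c
        _ ≈ᵇ c :: b :: a :: c :: b :: q := hsq.append_left [c, b, a]
        _ ≈ᵇ c :: b :: c :: a :: b :: q := (WordEquiv.swap hac (b :: q)).append_left [c, b]
        _ ≈ᵇ b :: c :: b :: a :: b :: q := .braid hcb _
        _ ≈ᵇ b :: c :: a :: b :: a :: q := (WordEquiv.braid hab.symm q).append_left [b, c]
        _ ≈ᵇ b :: a :: c :: b :: a :: q := (WordEquiv.swap hac.symm _).cons b
    · calc v ≈ᵇ c :: b :: w := h₂
        _ ≈ᵇ c :: b :: a :: r := hwr.append_left [c, b]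
        _ ≈ᵇ c :: b :: a :: b :: c :: q := hrq.append_left [c, b, a]
        _ ≈ᵇ c :: a :: b :: a :: c :: q := (WordEquiv.braid hab.symm _).cons c
        _ ≈ᵇ a :: c :: b :: a :: c :: q := .swap hac.symm _
        _ ≈ᵇ a :: c :: b :: c :: a :: q := (WordEquiv.swap hac q).append_left [a, c, b]
        _ ≈ᵇ a :: b :: c :: b :: a :: q := (WordEquiv.braid hcb _).cons a

theorem swap_head (ih : FactorsThroughLcmBelow m N) (hac : Distant a c) (ht : t.length < N)
    (h : FactorsThroughLcm c b (a :: t) v) : FactorsThroughLcm a b (c :: t) v := by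
  rcases h with ⟨rfl, h⟩ | ⟨hcb, w, h₁, h₂⟩ | ⟨hcb, w, h₁, h₂⟩
  · exact .inr (.inl ⟨hac, t, .refl _, h.symm⟩)
  · exact ih.swap_head_of_distant hac hcb ht h₁ h₂
  · exact ih.swap_head_of_adjacent hac hcb ht h₁ h₂

theorem braid_head_of_distant (ih : FactorsThroughLcmBelow m N) (hac : Adjacent a c)
    (hcb : Distant c b) (ht : t.length + 1 < N) (h₁ : a :: c :: t ≈ᵇ b :: w)
    (h₂ : v ≈ᵇ c :: w) : FactorsThroughLcm a b (c :: a :: t) v := by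
  rcases ih a b (c :: t) w ht h₁ with ⟨rfl, -⟩ | ⟨hab, s, hs, hw⟩ | ⟨hab, s, hs, hw⟩
  · exact absurd hcb.symm hac.not_distant
  · obtain ⟨r, htr, hsr⟩ := ih.distant (Nat.lt_of_succ_lt ht) hcb hs
    refine .inr (.inl ⟨hab, c :: a :: r, ?_, ?_⟩)
    · calc c :: a :: t ≈ᵇ c :: a :: b :: r := htr.append_left [c, a]
        _ ≈ᵇ c :: b :: a :: r := (WordEquiv.swap hab r).cons c
        _ ≈ᵇ b :: c :: a :: r := .swap hcb _
    · calc v ≈ᵇ c :: w := h₂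
        _ ≈ᵇ c :: a :: s := hw.cons c
        _ ≈ᵇ c :: a :: c :: r := hsr.append_left [c, a]
        _ ≈ᵇ a :: c :: a :: r := .braid hac.symm r
  · obtain ⟨r, htr, hsr⟩ := ih.distant (Nat.lt_of_succ_lt ht) hcb hs
    have hs_len : s.length < N := by
      have := hs.length_eq; simp only [List.length_cons] at this; omega
    obtain ⟨q, hsq, hrq⟩ := ih.adjacent hs_len hac hsr
    refine .inr (.inr ⟨hab, c :: a :: b :: q, ?_, ?_⟩)
    · calc c :: a :: t ≈ᵇ c :: a :: b :: r := htr.append_left [c, a]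
        _ ≈ᵇ c :: a :: b :: a :: c :: q := hrq.append_left [c, a, b]
        _ ≈ᵇ c :: b :: a :: b :: c :: q := (WordEquiv.braid hab _).cons c
        _ ≈ᵇ b :: c :: a :: b :: c :: q := .swap hcb _
        _ ≈ᵇ b :: c :: a :: c :: b :: q := (WordEquiv.swap hcb.symm q).append_left [b, c, a]
        _ ≈ᵇ b :: a :: c :: a :: b :: q := (WordEquiv.braid hac.symm _).cons b
    · calc v ≈ᵇ c :: w := h₂
        _ ≈ᵇ c :: a :: b :: s := hw.cons c
        _ ≈ᵇ c :: a :: b :: c :: a :: q := hsq.append_left [c, a, b]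
        _ ≈ᵇ c :: a :: c :: b :: a :: q := (WordEquiv.swap hcb.symm _).append_left [c, a]
        _ ≈ᵇ a :: c :: a :: b :: a :: q := .braid hac.symm _
        _ ≈ᵇ a :: c :: b :: a :: b :: q := (WordEquiv.braid hab q).append_left [a, c]
        _ ≈ᵇ a :: b :: c :: a :: b :: q := (WordEquiv.swap hcb _).cons a

theorem braid_head_of_adjacent (ih : FactorsThroughLcmBelow m N) (hac : Adjacent a c)
    (hcb : Adjacent c b) (ht : t.length + 1 < N) (h₁ : a :: c :: t ≈ᵇ b :: c :: w)
    (h₂ : v ≈ᵇ c :: b :: w) : FactorsThroughLcm a b (c :: a :: t) v := by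
  have hlen := h₁.length_eq
  simp only [List.length_cons] at hlen
  rcases ih a b (c :: t) (c :: w) ht h₁ with ⟨rfl, h⟩ | ⟨hab, s, hs, hw⟩ | ⟨hab, -⟩
  · exact .inl ⟨rfl, ((ih.cancel (by omega) h).append_left [c, a]).trans h₂.symm⟩
  · obtain ⟨q, htq, hsq⟩ := ih.adjacent (by omega) hcb hs
    obtain ⟨q', hwq', hsq'⟩ := ih.adjacent (by omega) hac.symm hw
    have hq_len := htq.length_eq
    simp only [List.length_cons] at hq_len
    have hqq' := ih.cancel (by simp only [List.length_cons]; omega) (hsq.symm.trans hsq')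
    obtain ⟨r, hqr, hq'r⟩ := ih.distant (by omega) hab.symm hqq'
    refine .inr (.inl ⟨hab, c :: a :: b :: c :: r, ?_, ?_⟩)
    · calc c :: a :: t ≈ᵇ c :: a :: b :: c :: q := htq.append_left [c, a]
        _ ≈ᵇ c :: a :: b :: c :: a :: r := hqr.append_left [c, a, b, c]
        _ ≈ᵇ c :: b :: a :: c :: a :: r := (WordEquiv.swap hab _).cons c
        _ ≈ᵇ c :: b :: c :: a :: c :: r := (WordEquiv.braid hac r).append_left [c, b]
        _ ≈ᵇ b :: c :: b :: a :: c :: r := .braid hcb _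
        _ ≈ᵇ b :: c :: a :: b :: c :: r := (WordEquiv.swap hab.symm _).append_left [b, c]
    · calc v ≈ᵇ c :: b :: w := h₂
        _ ≈ᵇ c :: b :: a :: c :: q' := hwq'.append_left [c, b]
        _ ≈ᵇ c :: b :: a :: c :: b :: r := hq'r.append_left [c, b, a, c]
        _ ≈ᵇ c :: a :: b :: c :: b :: r := (WordEquiv.swap hab.symm _).cons c
        _ ≈ᵇ c :: a :: c :: b :: c :: r := (WordEquiv.braid hcb.symm r).append_left [c, a]
        _ ≈ᵇ a :: c :: a :: b :: c :: r := .braid hac.symm _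
  · unfold Adjacent at hab hac hcb; omega

theorem braid_head (ih : FactorsThroughLcmBelow m N) (hac : Adjacent a c)
    (ht : t.length + 1 < N) (h : FactorsThroughLcm c b (a :: c :: t) v) :
    FactorsThroughLcm a b (c :: a :: t) v := by
  rcases h with ⟨rfl, h⟩ | ⟨hcb, w, h₁, h₂⟩ | ⟨hcb, w, h₁, h₂⟩
  · exact .inr (.inr ⟨hac, t, .refl _, h.symm⟩)
  · exact ih.braid_head_of_distant hac hcb ht h₁ h₂
  · exact ih.braid_head_of_adjacent hac hcb ht h₁ h₂

theorem succ (ih : FactorsThroughLcmBelow m N) : FactorsThroughLcmBelow m (N + 1) := by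
  intro a b u v hu h
  suffices key : ∀ s, s ≈ᵇ b :: v →
      ∀ a u, s = a :: u → u.length < N + 1 → FactorsThroughLcm a b u v from
    key _ h a u rfl hu
  intro s hs
  induction hs using Relation.ReflTransGen.head_induction_on with
  | refl =>
    rintro a u ⟨⟩ -
    exact .inl ⟨rfl, .refl _⟩
  | head hstep _ ihs =>
    rintro a u rfl hu
    cases hstep with
    | swap hac t =>
      exact ih.swap_head hac (by simpa using hu) (ihs _ _ rfl (by simpa using hu))
    | braid hac t =>
      exact ih.braid_head hac (by simpa using hu) (ihs _ _ rfl (by simpa using hu))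
    | cons _ hstep =>
      exact (ihs a _ rfl (hstep.length_eq ▸ hu)).congr_left (.single hstep)

end FactorsThroughLcmBelow

theorem factorsThroughLcmBelow (N : ℕ) : FactorsThroughLcmBelow m N := by
  induction N with
  | zero => intro a b u v hu; exact absurd hu (Nat.not_lt_zero _)
  | succ N ih => exact ih.succ

theorem FactorsThroughLcm.of_wordEquiv {a b : Fin m} {u v : List (Fin m)}
    (h : a :: u ≈ᵇ b :: v) : FactorsThroughLcm a b u v :=
  factorsThroughLcmBelow _ a b u v (Nat.lt_succ_self _) h

theorem WordEquiv.of_cons {a : Fin m} {u v : List (Fin m)} (h : a :: u ≈ᵇ a :: v) :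
    u ≈ᵇ v :=
  (FactorsThroughLcm.of_wordEquiv h).of_eq

end Words

section Monoid

variable {n : ℕ}

def ofWord (u : List (Fin (n - 1))) : BraidMonoid n :=
  (conGen (BraidRel n)).mk' (FreeMonoid.ofList u)

theorem ofWord_nil : ofWord (n := n) [] = 1 := rfl

theorem ofWord_cons (i : Fin (n - 1)) (u : List (Fin (n - 1))) :
    ofWord (i :: u) = gen i * ofWord u := by
  rw [ofWord, FreeMonoid.ofList_cons, map_mul]
  rfl

theorem ofWord_surjective : Function.Surjective (ofWord (n := n)) := fun z => by
  obtain ⟨w, rfl⟩ := Con.mk'_surjective (c := conGen (BraidRel n)) z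
  exact ⟨w.toList, rfl⟩

theorem Step.conGen_ofList {u v : List (Fin (n - 1))} (h : Step u v) :
    conGen (BraidRel n) (FreeMonoid.ofList u) (FreeMonoid.ofList v) := by
  induction h with
  | swap h t =>
    simp only [FreeMonoid.ofList_cons, ← mul_assoc]
    refine ConGen.Rel.mul ?_ (ConGen.Rel.refl _)
    rcases h with h | h
    · exact ConGen.Rel.of _ _ (.comm _ _ h)
    · exact ConGen.Rel.symm (ConGen.Rel.of _ _ (.comm _ _ h))
  | braid h t =>
    simp only [FreeMonoid.ofList_cons, ← mul_assoc]
    refine ConGen.Rel.mul ?_ (ConGen.Rel.refl _)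
    rcases h with h | h
    · exact ConGen.Rel.of _ _ (.braid _ _ h)
    · exact ConGen.Rel.symm (ConGen.Rel.of _ _ (.braid _ _ h))
  | cons x _ ih =>
    simp only [FreeMonoid.ofList_cons]
    exact ConGen.Rel.mul (ConGen.Rel.refl _) ih

theorem WordEquiv.of_conGen {x y : FreeMonoid (Fin (n - 1))} (h : conGen (BraidRel n) x y) :
    x.toList ≈ᵇ y.toList := by
  induction h with
  | of x y hxy =>
    cases hxy with
    | comm i j h => exact .swap (.inl h) []
    | braid i j h => exact .braid (.inl h) []
  | refl => rfl
  | symm _ ih => exact ih.symm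
  | trans _ _ ih₁ ih₂ => exact ih₁.trans ih₂
  | mul _ _ ih₁ ih₂ => exact ih₁.append ih₂

theorem ofWord_eq_ofWord_iff {u v : List (Fin (n - 1))} :
    ofWord (n := n) u = ofWord v ↔ u ≈ᵇ v := by
  refine ⟨fun h => WordEquiv.of_conGen ((Con.eq _).mp h), fun h => (Con.eq _).mpr ?_⟩
  induction h with
  | refl => exact ConGen.Rel.refl _
  | tail _ hs ih => exact ConGen.Rel.trans ih hs.conGen_ofList

theorem isLeftRegular_gen (i : Fin (n - 1)) : IsLeftRegular (gen (n := n) i) := by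
  intro u v h
  obtain ⟨u, rfl⟩ := ofWord_surjective u
  obtain ⟨v, rfl⟩ := ofWord_surjective v
  change gen i * ofWord u = gen i * ofWord v at h
  rw [← ofWord_cons, ← ofWord_cons, ofWord_eq_ofWord_iff] at h
  exact ofWord_eq_ofWord_iff.mpr h.of_cons

instance : IsLeftCancelMul (BraidMonoid n) where
  mul_left_cancel x := by
    obtain ⟨l, rfl⟩ := ofWord_surjective x
    induction l with
    | nil => exact isRegular_one.left
    | cons i l ih =>
      rw [ofWord_cons]
      exact (isLeftRegular_gen i).mul ih

theorem gen_mul_ne_one (i : Fin (n - 1)) (z : BraidMonoid n) : gen i * z ≠ 1 := by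
  obtain ⟨l, rfl⟩ := ofWord_surjective z
  rw [← ofWord_cons, ← ofWord_nil, Ne, ofWord_eq_ofWord_iff]
  intro h
  simpa using h.length_eq

theorem exists_gen_dvd_of_ne_one {z : BraidMonoid n} (hz : z ≠ 1) : ∃ i, gen i ∣ z := by
  obtain ⟨_ | ⟨i, l⟩, rfl⟩ := ofWord_surjective z
  · exact absurd ofWord_nil hz
  · exact ⟨i, ofWord l, ofWord_cons i l⟩

end Monoid

theorem apply_eq_sum_mul_tsum_of_sum_indicator {α ι R : Type*} [Fintype ι] [NormedRing R]
    [CompleteSpace R] {w : α → R} (hw : Summable w) (c : ι → R) (A : ι → Set α) (x : α)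
    (h : ∀ y, ∑ i, c i * (A i).indicator 1 y = if y = x then 1 else 0) :
    w x = ∑ i, c i * ∑' y : A i, w y := by
  have hw_ind (i : ι) : (A i).indicator w = fun y => (A i).indicator 1 y * w y := by
    ext y; simp [Set.indicator_apply]
  calc w x = ∑' y, (if y = x then 1 else 0) * w y := by simp
    _ = ∑' y, ∑ i, c i * (A i).indicator w y := by
      simp_rw [← h, Finset.sum_mul, hw_ind, mul_assoc]
    _ = ∑ i, ∑' y, c i * (A i).indicator w y :=
      Summable.tsum_finsetSum fun i _ => (hw.indicator _).mul_left _
    _ = ∑ i, c i * ∑' y : A i, w y := by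
      simp_rw [(hw.indicator _).tsum_mul_left, tsum_subtype]

section Lub

variable {n : ℕ}

/-- Phrased with `∣`, which unfolds to `ldvd`, so the hypothesis of the theorem applies as is. -/
def IsLeftLub (X : Finset (Fin (n - 1))) (d : BraidMonoid n) : Prop :=
  (∀ i ∈ X, gen i ∣ d) ∧ ∀ z : BraidMonoid n, (∀ i ∈ X, gen i ∣ z) → d ∣ z

theorem IsLeftLub.dvd_iff {X : Finset (Fin (n - 1))} {d z : BraidMonoid n} (h : IsLeftLub X d) :
    d ∣ z ↔ ∀ i ∈ X, gen i ∣ z :=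
  ⟨fun hd i hi => (h.1 i hi).trans hd, h.2 z⟩

theorem filter_gen_dvd_eq_empty_iff (z : BraidMonoid n) :
    Finset.univ.filter (fun i => gen i ∣ z) = ∅ ↔ z = 1 := by
  rw [Finset.filter_eq_empty_iff]
  constructor
  · intro h
    by_contra hz
    obtain ⟨i, hi⟩ := exists_gen_dvd_of_ne_one hz
    exact h (Finset.mem_univ i) hi
  · rintro rfl i - ⟨c, hc⟩
    exact gen_mul_ne_one i c hc.symm

theorem sum_neg_one_pow_of_lub_dvd {Δhat : Finset (Fin (n - 1)) → BraidMonoid n}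
    (hΔ : ∀ X, IsLeftLub X (Δhat X)) (z : BraidMonoid n) :
    ∑ X, (if Δhat X ∣ z then (-1 : ℝ) ^ X.card else 0) = if z = 1 then 1 else 0 := by
  have hfilter : Finset.univ.filter (fun X => Δhat X ∣ z) =
      (Finset.univ.filter fun i => gen i ∣ z).powerset := by
    ext X
    simp [(hΔ X).dvd_iff, Finset.subset_iff]
  rw [← Finset.sum_filter, hfilter, ← filter_gen_dvd_eq_empty_iff]
  exact_mod_cast Finset.sum_powerset_neg_one_pow_card

theorem sum_neg_one_pow_mul_indicator_dvd {Δhat : Finset (Fin (n - 1)) → BraidMonoid n}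
    (hΔ : ∀ X, IsLeftLub X (Δhat X)) (x y : BraidMonoid n) :
    ∑ X, (-1 : ℝ) ^ X.card * {t | x * Δhat X ∣ t}.indicator 1 y =
      if y = x then 1 else 0 := by
  simp only [Set.indicator_apply, Set.mem_ofPred_eq, Pi.one_apply, mul_ite, mul_one, mul_zero]
  by_cases hxy : x ∣ y
  · obtain ⟨z, rfl⟩ := hxy
    simp only [(IsLeftCancelMul.mul_left_cancel x).dvd_cancel_left, mul_eq_left]
    exact sum_neg_one_pow_of_lub_dvd hΔ z
  · have hyx : y ≠ x := fun h => hxy (h ▸ dvd_refl x)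
    simp only [hyx, if_false]
    exact Finset.sum_eq_zero fun X _ => if_neg fun h => hxy (dvd_of_mul_right_dvd h)

end Lub

theorem uniform_weight_singletons_general (n : ℕ)
    (len : BraidMonoid n → ℕ)
    (hlen_mul : ∀ x y : BraidMonoid n, len (x * y) = len x + len y)
    (Δhat : Finset (Fin (n - 1)) → BraidMonoid n)
    (hlub_l : ∀ X : Finset (Fin (n - 1)),
      (∀ i ∈ X, ldvd (gen i) (Δhat X)) ∧
        ∀ z : BraidMonoid n, (∀ i ∈ X, ldvd (gen i) z) → ldvd (Δhat X) z)
    (p : ℝ)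
    (w : BraidMonoid n → ℝ)
    (hws : Summable w)
    (hcyl : ∀ x : BraidMonoid n, (∑' y : {y : BraidMonoid n // ldvd x y}, w y.1) = p ^ len x) :
    ∀ x : BraidMonoid n,
      w x = p ^ len x *
        ∑ X : Finset (Fin (n - 1)), (-1 : ℝ) ^ X.card * p ^ len (Δhat X) := by
  intro x
  rw [apply_eq_sum_mul_tsum_of_sum_indicator hws _ _ x
    (sum_neg_one_pow_mul_indicator_dvd hlub_l x), Finset.mul_sum]
  refine Finset.sum_congr rfl fun X _ => ?_
  have hcyl_X : ∑' y : {t | x * Δhat X ∣ t}, w y = p ^ len x * p ^ len (Δhat X) := by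
    rw [← pow_add, ← hlen_mul]
    exact hcyl (x * Δhat X)
  rw [hcyl_X]
  ring

/-- Any nonnegative summable weight on `Br_n` giving mass
`p^{ℓ(x)}` to every visual cylinder is given on singletons by inclusion–exclusion:
`w(x) = H_n(p)·p^{ℓ(x)}`. -/
theorem uniform_weight_singletons (n : ℕ) (hn : 2 ≤ n)
    (len : BraidMonoid n → ℕ)
    (hlen_mul : ∀ x y : BraidMonoid n, len (x * y) = len x + len y)
    (hlen_gen : ∀ i : Fin (n - 1), len (gen i) = 1)
    (Δhat : Finset (Fin (n - 1)) → BraidMonoid n)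
    (hlub_l : ∀ X : Finset (Fin (n - 1)),
      (∀ i ∈ X, ldvd (gen i) (Δhat X)) ∧
        ∀ z : BraidMonoid n, (∀ i ∈ X, ldvd (gen i) z) → ldvd (Δhat X) z)
    (hlub_r : ∀ X : Finset (Fin (n - 1)),
      (∀ i ∈ X, rdvd (gen i) (Δhat X)) ∧
        ∀ z : BraidMonoid n, (∀ i ∈ X, rdvd (gen i) z) → rdvd (Δhat X) z)
    (p : ℝ) (hp : 0 ≤ p)
    (w : BraidMonoid n → ℝ) (hw0 : ∀ x : BraidMonoid n, 0 ≤ w x)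
    (hws : Summable w)
    (hcyl : ∀ x : BraidMonoid n, (∑' y : {y : BraidMonoid n // ldvd x y}, w y.1) = p ^ len x) :
    ∀ x : BraidMonoid n,
      w x = p ^ len x *
        ∑ X : Finset (Fin (n - 1)), (-1 : ℝ) ^ X.card * p ^ len (Δhat X) :=
  uniform_weight_singletons_general n len hlen_mul Δhat hlub_l p w hws hcyl

end BraidMeasure
end

section
/- For every real number t, Σ_{X ⊆ Σ} (−1)^{|X|} t^{ℓ(Δ̂(X))} = H_n(t), where the sum is over all subsets X of the generating set Σ of Br_n and H_n is the Möbius polynomial defined by the recursion H_0 = H_1 = 1, H_n(t) = Σ_{k=1}^{n} (−1)^{k+1} t^{k(k−1)/2} H_{n−k}(t). -/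
open scoped Classical

namespace BraidMeasure

/-!
The least common left multiple `Δ̂(X)` of a set `X` of Artin generators is the product of the
Garside elements of the maximal runs of consecutive generators in `X`, so `ℓ(Δ̂(X))` is the
number of integer intervals contained in `X` (a run of length `m` contributes `m(m+1)/2`).
The upper bound exhibits that product as a common left multiple. The lower bound uses the
action of `Br_n` on sequences in which `σ_i` sorts positions `i, i+1` into decreasing order:
each generator creates at most one inversion, and a left divisor `σ_i` forces a descent at `i`,
so descents along an interval `[a, b] ⊆ X` give an inversion `(a, b + 1)`.
Splitting `X ⊆ {0, …, n-2}` at its first gap `m` then turns the alternating sum into the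
recursion defining `H_n`.
-/

open Finset

@[elab_as_elim]
theorem BraidMonoid.induction_on {n : ℕ} {p : BraidMonoid n → Prop} (x : BraidMonoid n)
    (one : p 1) (gen_mul : ∀ i x, p x → p (gen i * x)) : p x := by
  obtain ⟨w, rfl⟩ := Con.mk'_surjective x
  induction w using FreeMonoid.recOn with
  | one => exact one
  | of_mul i w ih => rw [map_mul]; exact gen_mul i _ ih

theorem gen_commute {n : ℕ} {i j : Fin (n - 1)} (h : (i : ℕ) + 2 ≤ j) :
    Commute (gen i) (gen j) :=
  (Con.eq _).mpr (ConGen.Rel.of _ _ (BraidRel.comm i j h))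

theorem gen_braid {n : ℕ} {i j : Fin (n - 1)} (h : (i : ℕ) + 1 = j) :
    gen i * gen j * gen i = gen j * gen i * gen j :=
  (Con.eq _).mpr (ConGen.Rel.of _ _ (BraidRel.braid i j h))

theorem gen'_of_lt {n i : ℕ} (h : i < n - 1) : (gen' i : BraidMonoid n) = gen ⟨i, h⟩ :=
  dif_pos h

theorem gen'_of_le {n i : ℕ} (h : n - 1 ≤ i) : (gen' i : BraidMonoid n) = 1 :=
  dif_neg (Nat.not_lt.mpr h)

theorem gen'_val {n : ℕ} (i : Fin (n - 1)) : (gen' i : BraidMonoid n) = gen i := gen'_of_lt i.2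

theorem commute_gen' {n i j : ℕ} (h : i + 2 ≤ j ∨ j + 2 ≤ i) :
    Commute (gen' i : BraidMonoid n) (gen' j) := by
  wlog hij : i + 2 ≤ j generalizing i j
  · exact (this h.symm (h.resolve_left hij)).symm
  rcases lt_or_ge j (n - 1) with hj | hj
  · rw [gen'_of_lt (by omega), gen'_of_lt hj]
    exact gen_commute hij
  · rw [gen'_of_le hj]
    exact Commute.one_right _

theorem gen'_braid {n i : ℕ} (h : i + 1 < n - 1) :
    (gen' i : BraidMonoid n) * gen' (i + 1) * gen' i = gen' (i + 1) * gen' i * gen' (i + 1) := by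
  rw [gen'_of_lt (by omega), gen'_of_lt h]
  exact gen_braid rfl

def risingRow {n : ℕ} : ℕ → ℕ → BraidMonoid n
  | _, 0 => 1
  | a, k + 1 => gen' a * risingRow (a + 1) k

def blockGarside {n : ℕ} (a : ℕ) : ℕ → BraidMonoid n
  | 0 => 1
  | k + 1 => risingRow a (k + 1) * blockGarside a k

theorem commute_gen'_risingRow {n j : ℕ} {a k : ℕ} (h : a + k + 1 ≤ j ∨ j + 2 ≤ a) :
    Commute (gen' j : BraidMonoid n) (risingRow a k) := by
  induction k generalizing a with
  | zero => exact Commute.one_right _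
  | succ k ih => exact (commute_gen' (by omega)).mul_right (ih (by omega))

theorem commute_gen'_blockGarside {n j : ℕ} {a k : ℕ} (h : a + k + 1 ≤ j) :
    Commute (gen' j : BraidMonoid n) (blockGarside a k) := by
  induction k with
  | zero => exact Commute.one_right _
  | succ k ih => exact (commute_gen'_risingRow (by omega)).mul_right (ih (by omega))

theorem gen'_mul_risingRow {n a k j : ℕ} (haj : a < j) (hjk : j < a + k) (hk : a + k ≤ n - 1) :
    (gen' j : BraidMonoid n) * risingRow a k = risingRow a k * gen' (j - 1) := by
  induction k generalizing a with
  | zero => omega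
  | succ k ih =>
    rcases Nat.lt_or_ge (a + 1) j with hj | hj
    · calc (gen' j : BraidMonoid n) * (gen' a * risingRow (a + 1) k)
          = gen' a * (gen' j * risingRow (a + 1) k) := by
            rw [← mul_assoc, (commute_gen' (Or.inr (by omega))).eq, mul_assoc]
        _ = gen' a * risingRow (a + 1) k * gen' (j - 1) := by
            rw [ih hj (by omega) (by omega), mul_assoc]
    · obtain rfl : j = a + 1 := by omega
      obtain ⟨k, rfl⟩ : ∃ k', k = k' + 1 := ⟨k - 1, by omega⟩
      have hcomm : Commute (gen' a : BraidMonoid n) (risingRow (a + 2) k) :=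
        commute_gen'_risingRow (Or.inr le_rfl)
      calc (gen' (a + 1) : BraidMonoid n) * (gen' a * (gen' (a + 1) * risingRow (a + 2) k))
          = gen' (a + 1) * gen' a * gen' (a + 1) * risingRow (a + 2) k := by
            simp only [mul_assoc]
        _ = gen' a * (gen' (a + 1) * (gen' a * risingRow (a + 2) k)) := by
            rw [← gen'_braid (by omega)]; simp only [mul_assoc]
        _ = gen' a * (gen' (a + 1) * risingRow (a + 2) k) * gen' (a + 1 - 1) := by
            rw [hcomm.eq]; simp only [mul_assoc, Nat.add_sub_cancel]

theorem gen'_dvd_blockGarside {n a k j : ℕ} (haj : a ≤ j) (hjk : j < a + k)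
    (hk : a + k ≤ n - 1) :
    (gen' j : BraidMonoid n) ∣ blockGarside a k := by
  induction k generalizing j with
  | zero => omega
  | succ k ih =>
    rcases haj.eq_or_lt with rfl | haj
    · exact Dvd.intro _ (mul_assoc _ _ _).symm
    · obtain ⟨z, hz⟩ := ih (j := j - 1) (by omega) (by omega) (by omega)
      refine ⟨risingRow a (k + 1) * z, ?_⟩
      change risingRow a (k + 1) * blockGarside a k = _
      rw [hz, ← mul_assoc, ← gen'_mul_risingRow haj hjk hk, mul_assoc]

section Length

variable {M : Type*} [Monoid M] {len : M → ℕ}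

theorem len_one (hmul : ∀ x y, len (x * y) = len x + len y) : len 1 = 0 := by
  simpa using hmul 1 1

theorem len_le_of_dvd (hmul : ∀ x y, len (x * y) = len x + len y) {x y : M} (h : x ∣ y) :
    len x ≤ len y := by
  obtain ⟨z, rfl⟩ := h
  rw [hmul]
  exact Nat.le_add_right _ _

end Length

section BraidLength

variable {n : ℕ} {len : BraidMonoid n → ℕ}

theorem len_gen'_le (hmul : ∀ x y, len (x * y) = len x + len y) (hgen : ∀ i, len (gen i) = 1)
    (i : ℕ) : len (gen' i) ≤ 1 := by
  unfold gen'
  split_ifs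
  · exact (hgen _).le
  · exact (len_one hmul).le.trans zero_le_one

theorem len_risingRow_le (hmul : ∀ x y, len (x * y) = len x + len y)
    (hgen : ∀ i, len (gen i) = 1) (a k : ℕ) : len (risingRow a k) ≤ k := by
  induction k generalizing a with
  | zero => exact (len_one hmul).le
  | succ k ih =>
    rw [risingRow, hmul]
    have := len_gen'_le hmul hgen a
    have := ih (a + 1)
    omega

theorem len_blockGarside_le (hmul : ∀ x y, len (x * y) = len x + len y)
    (hgen : ∀ i, len (gen i) = 1) (a k : ℕ) : len (blockGarside a k) ≤ (k + 1) * k / 2 := by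
  induction k with
  | zero => exact (len_one hmul).le
  | succ k ih =>
    rw [blockGarside, hmul]
    have := len_risingRow_le hmul hgen a (k + 1)
    have : (k + 1 + 1) * (k + 1) = (k + 1) * k + 2 * (k + 1) := by ring
    omega

end BraidLength

def sortStep (i : ℕ) (s : ℕ → ℕ) : ℕ → ℕ := fun j =>
  if j = i then max (s i) (s (i + 1)) else if j = i + 1 then min (s i) (s (i + 1)) else s j

theorem sortStep_comm {i j : ℕ} (h : i + 2 ≤ j) :
    sortStep i ∘ sortStep j = sortStep j ∘ sortStep i := by
  funext s k
  simp only [Function.comp, sortStep]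
  split_ifs <;> omega

theorem sortStep_braid (i : ℕ) :
    sortStep i ∘ sortStep (i + 1) ∘ sortStep i
      = sortStep (i + 1) ∘ sortStep i ∘ sortStep (i + 1) := by
  funext s k
  simp only [Function.comp, sortStep]
  split_ifs <;> omega

theorem sortStep_of_le {i : ℕ} {s : ℕ → ℕ} (h : s (i + 1) ≤ s i) : sortStep i s = s := by
  funext j
  simp only [sortStep]
  split_ifs with h₁ h₂
  · subst h₁; omega
  · subst h₂; omega
  · rfl

theorem sortStep_of_lt {i : ℕ} {s : ℕ → ℕ} (h : s i < s (i + 1)) :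
    sortStep i s = s ∘ Equiv.swap i (i + 1) := by
  funext j
  simp only [sortStep, Function.comp, Equiv.swap_apply_def]
  split_ifs <;> omega

theorem sortStep_injective {i : ℕ} {s : ℕ → ℕ} (hs : Function.Injective s) :
    Function.Injective (sortStep i s) := by
  rcases le_or_gt (s (i + 1)) (s i) with h | h
  · rwa [sortStep_of_le h]
  · rw [sortStep_of_lt h]
    exact hs.comp (Equiv.injective _)

def sortAction {n : ℕ} : BraidMonoid n →* Function.End (ℕ → ℕ) :=
  Con.lift _ (FreeMonoid.lift fun i : Fin (n - 1) => (sortStep i : Function.End (ℕ → ℕ))) <|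
    Con.conGen_le.mpr fun x y h => by
      rcases h with ⟨i, j, h⟩ | ⟨i, ⟨j, hj⟩, h⟩ <;>
        simp only [Con.ker_rel, map_mul]
      · exact sortStep_comm h
      · obtain rfl : j = i + 1 := h.symm
        exact sortStep_braid i

theorem sortAction_gen {n : ℕ} (i : Fin (n - 1)) :
    (sortAction (gen i) : Function.End (ℕ → ℕ)) = sortStep i :=
  (Con.lift_mk' _ _).trans (FreeMonoid.lift_eval_of _ i)

theorem sortAction_gen_mul {n : ℕ} (i : Fin (n - 1)) (x : BraidMonoid n) (s : ℕ → ℕ) :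
    (sortAction (gen i * x) : Function.End (ℕ → ℕ)) s = sortStep i (sortAction x s) := by
  rw [map_mul, Function.End.mul_def, sortAction_gen]
  rfl

theorem sortAction_injective {n : ℕ} (x : BraidMonoid n) {s : ℕ → ℕ}
    (hs : Function.Injective s) :
    Function.Injective ((sortAction x : Function.End (ℕ → ℕ)) s) := by
  induction x using BraidMonoid.induction_on with
  | one => exact hs
  | gen_mul i x ih => rw [sortAction_gen_mul]; exact sortStep_injective ih

theorem sortAction_lt_of_dvd {n : ℕ} {i : Fin (n - 1)} {x : BraidMonoid n} (h : gen i ∣ x) :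
    (sortAction x : Function.End (ℕ → ℕ)) id (i + 1) < sortAction x id i := by
  obtain ⟨z, rfl⟩ := h
  have hne : (sortAction z : Function.End (ℕ → ℕ)) id i ≠ sortAction z id (i + 1) :=
    (sortAction_injective z Function.injective_id).ne (by omega)
  rw [sortAction_gen_mul]
  simp only [sortStep]
  split_ifs <;> omega

def inversions (N : ℕ) (s : ℕ → ℕ) : Finset (ℕ × ℕ) :=
  {p ∈ range N ×ˢ range N | p.1 < p.2 ∧ s p.2 < s p.1}

def invCount (N : ℕ) (s : ℕ → ℕ) : ℕ := #(inversions N s)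

theorem invCount_id (N : ℕ) : invCount N id = 0 := by
  simp only [invCount, inversions, card_eq_zero, filter_eq_empty_iff, id]
  omega

theorem invCount_sortStep_le {N i : ℕ} (hi : i + 1 < N) (s : ℕ → ℕ) :
    invCount N (sortStep i s) ≤ invCount N s + 1 := by
  rcases le_or_gt (s (i + 1)) (s i) with h | h
  · rw [sortStep_of_le h]; omega
  rw [sortStep_of_lt h]
  set τ := Equiv.swap i (i + 1)
  have hτ : ∀ j, τ j = if j = i then i + 1 else if j = i + 1 then i else j :=
    fun j => Equiv.swap_apply_def _ _ _
  -- `τ` maps every inversion of `s ∘ τ` other than `(i, i + 1)` to an inversion of `s`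
  have hinj : #((inversions N (s ∘ τ)).erase (i, i + 1)) ≤ invCount N s := by
    refine card_le_card_of_injOn (fun p => (τ p.1, τ p.2)) (fun p hp => ?_) fun p _ q _ hpq => ?_
    · simp only [inversions, coe_erase, Set.mem_sdiff, mem_coe, mem_filter, mem_product,
        mem_range, Function.comp, Set.mem_singleton_iff, Prod.ext_iff, not_and, hτ] at hp ⊢
      split_ifs at hp ⊢ <;> omega
    · simp only [Prod.ext_iff, τ.injective.eq_iff] at hpq ⊢
      exact hpq
  have := pred_card_le_card_erase (s := inversions N (s ∘ τ)) (a := (i, i + 1))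
  rw [invCount]
  omega

theorem invCount_sortAction_le {n : ℕ} {len : BraidMonoid n → ℕ}
    (hmul : ∀ x y, len (x * y) = len x + len y) (hgen : ∀ i, len (gen i) = 1)
    (x : BraidMonoid n) (s : ℕ → ℕ) :
    invCount n ((sortAction x : Function.End (ℕ → ℕ)) s) ≤ invCount n s + len x := by
  induction x using BraidMonoid.induction_on with
  | one => rw [len_one hmul]; exact le_rfl
  | gen_mul i x ih =>
    rw [sortAction_gen_mul, hmul, hgen]
    have := invCount_sortStep_le (i := i) (N := n) (by omega) (sortAction x s)
    omega

def intervalPairs (S : Finset ℕ) : Finset (ℕ × ℕ) :=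
  {p ∈ S ×ˢ S | p.1 ≤ p.2 ∧ Icc p.1 p.2 ⊆ S}

def intervalCount (S : Finset ℕ) : ℕ := #(intervalPairs S)

theorem mem_intervalPairs {S : Finset ℕ} {p : ℕ × ℕ} :
    p ∈ intervalPairs S ↔ p.1 ≤ p.2 ∧ Icc p.1 p.2 ⊆ S := by
  simp only [intervalPairs, mem_filter, mem_product, and_iff_right_iff_imp, and_imp]
  intro hle hS
  exact ⟨hS (left_mem_Icc.mpr hle), hS (right_mem_Icc.mpr hle)⟩

theorem intervalCount_le_invCount {N : ℕ} {S : Finset ℕ} {u : ℕ → ℕ}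
    (hS : ∀ i ∈ S, i + 1 < N) (hdesc : ∀ i ∈ S, u (i + 1) < u i) :
    intervalCount S ≤ invCount N u := by
  refine card_le_card_of_injOn (fun p => (p.1, p.2 + 1)) (fun p hp => ?_) ?_
  · obtain ⟨hle, hsub⟩ := mem_intervalPairs.mp hp
    have hanti : StrictAntiOn u (Set.Icc p.1 (p.2 + 1)) :=
      strictAntiOn_of_add_one_lt Set.ordConnected_Icc fun a _ ha ha' =>
        hdesc a (hsub (mem_Icc.mpr ⟨ha.1, by have := ha'.2; omega⟩))
    have h₂ := hS _ (hsub (right_mem_Icc.mpr hle))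
    simp only [inversions, mem_coe, mem_filter, mem_product, mem_range]
    exact ⟨⟨by omega, h₂⟩, by omega,
      hanti ⟨le_rfl, by omega⟩ ⟨by omega, le_rfl⟩ (by omega)⟩
  · intro p _ q _ h
    simp only [Prod.ext_iff, add_left_inj] at h ⊢
    exact h

theorem intervalPairs_union {A B : Finset ℕ} {g : ℕ} (hA : ∀ a ∈ A, a < g)
    (hB : ∀ b ∈ B, g < b) :
    intervalPairs (A ∪ B) = intervalPairs A ∪ intervalPairs B := by
  ext ⟨a, b⟩
  simp only [mem_union, mem_intervalPairs]
  constructor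
  · rintro ⟨hab, hsub⟩
    have hg : g ∉ Icc a b := fun h => by
      rcases mem_union.mp (hsub h) with h | h
      · exact (hA g h).false
      · exact (hB g h).false
    rw [mem_Icc, not_and_or, not_le, not_le] at hg
    rcases hg with hg | hg
    · refine .inr ⟨hab, fun c hc => (mem_union.mp (hsub hc)).resolve_left fun h => ?_⟩
      have := hA c h; have := mem_Icc.mp hc; omega
    · refine .inl ⟨hab, fun c hc => (mem_union.mp (hsub hc)).resolve_right fun h => ?_⟩
      have := hB c h; have := mem_Icc.mp hc; omega
  · rintro (⟨hab, hsub⟩ | ⟨hab, hsub⟩)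
    · exact ⟨hab, hsub.trans subset_union_left⟩
    · exact ⟨hab, hsub.trans subset_union_right⟩

theorem intervalCount_union {A B : Finset ℕ} {g : ℕ} (hA : ∀ a ∈ A, a < g)
    (hB : ∀ b ∈ B, g < b) : intervalCount (A ∪ B) = intervalCount A + intervalCount B := by
  rw [intervalCount, intervalPairs_union hA hB, card_union_of_disjoint]
  · rfl
  refine disjoint_left.mpr fun p hpA hpB => ?_
  have := hA _ (mem_product.mp (mem_filter.mp hpA).1).1
  have := hB _ (mem_product.mp (mem_filter.mp hpB).1).1
  omega

theorem intervalPairs_map_add (S : Finset ℕ) (c : ℕ) :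
    intervalPairs (S.map (addRightEmbedding c)) =
      (intervalPairs S).map ((addRightEmbedding c).prodMap (addRightEmbedding c)) := by
  ext ⟨a, b⟩
  simp only [mem_map, mem_intervalPairs, Prod.exists, Function.Embedding.coe_prodMap,
    Prod.map_apply, Prod.mk.injEq, addRightEmbedding_apply]
  constructor
  · rintro ⟨hab, hsub⟩
    obtain ⟨a', -, rfl⟩ := mem_map.mp (hsub (left_mem_Icc.mpr hab))
    obtain ⟨b', -, rfl⟩ := mem_map.mp (hsub (right_mem_Icc.mpr hab))
    refine ⟨a', b', ⟨by simpa using hab, ?_⟩, rfl, rfl⟩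
    rwa [← map_subset_map (f := addRightEmbedding c), map_add_right_Icc]
  · rintro ⟨a', b', ⟨hab, hsub⟩, rfl, rfl⟩
    refine ⟨by simpa using hab, ?_⟩
    rw [← map_add_right_Icc]
    exact map_subset_map.mpr hsub

theorem intervalCount_map_add (S : Finset ℕ) (c : ℕ) :
    intervalCount (S.map (addRightEmbedding c)) = intervalCount S := by
  rw [intervalCount, intervalPairs_map_add, card_map, intervalCount]

theorem intervalPairs_range_add_one (m : ℕ) :
    intervalPairs (range (m + 1)) = intervalPairs (range m) ∪ range (m + 1) ×ˢ {m} := by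
  ext ⟨a, b⟩
  simp only [mem_union, mem_intervalPairs, mem_product, mem_singleton, mem_range, subset_iff,
    mem_Icc]
  constructor
  · rintro ⟨hab, hsub⟩
    have := hsub ⟨hab, le_rfl⟩
    by_cases hb : b = m
    · exact .inr ⟨by omega, hb⟩
    · exact .inl ⟨hab, fun x hx => by have := hx.2; omega⟩
  · rintro (⟨hab, hsub⟩ | ⟨ha, rfl⟩)
    · exact ⟨hab, fun x hx => (hsub hx).trans (Nat.lt_add_one m)⟩
    · exact ⟨by omega, fun x hx => by have := hx.2; omega⟩

theorem intervalCount_range (m : ℕ) : intervalCount (range m) = (m + 1) * m / 2 := by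
  induction m with
  | zero => rfl
  | succ m ih =>
    rw [intervalCount, intervalPairs_range_add_one, card_union_of_disjoint, card_product,
      card_range, card_singleton, ← intervalCount, ih]
    · have : (m + 1 + 1) * (m + 1) = (m + 1) * m + 2 * (m + 1) := by ring
      omega
    · refine disjoint_left.mpr fun p hp hp' => ?_
      have := (mem_range.mp (mem_product.mp (mem_filter.mp hp).1).2)
      have := mem_singleton.mp (mem_product.mp hp').2
      omega

def joinAtGap (m : ℕ) (S : Finset ℕ) : Finset ℕ :=
  range m ∪ S.map (addRightEmbedding (m + 1))

theorem mem_joinAtGap {m c : ℕ} {S : Finset ℕ} :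
    c ∈ joinAtGap m S ↔ c < m ∨ m < c ∧ c - (m + 1) ∈ S := by
  simp only [joinAtGap, mem_union, mem_range, mem_map, addRightEmbedding_apply]
  constructor
  · rintro (h | ⟨y, hy, rfl⟩)
    · exact .inl h
    · exact .inr ⟨by omega, by simpa using hy⟩
  · rintro (h | ⟨h, hS⟩)
    · exact .inl h
    · exact .inr ⟨_, hS, by omega⟩

theorem card_joinAtGap (m : ℕ) (S : Finset ℕ) : #(joinAtGap m S) = m + #S := by
  rw [joinAtGap, card_union_of_disjoint, card_range, card_map]
  refine disjoint_left.mpr fun c hc hc' => ?_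
  simp only [mem_range, mem_map, addRightEmbedding_apply] at hc hc'
  obtain ⟨y, -, rfl⟩ := hc'
  omega

theorem intervalCount_joinAtGap (m : ℕ) (S : Finset ℕ) :
    intervalCount (joinAtGap m S) = (m + 1) * m / 2 + intervalCount S := by
  rw [joinAtGap, intervalCount_union (g := m), intervalCount_range, intervalCount_map_add]
  · exact fun a ha => mem_range.mp ha
  · intro b hb
    obtain ⟨y, -, rfl⟩ := mem_map.mp hb
    simp only [addRightEmbedding_apply]
    omega

theorem joinAtGap_inj {m m' : ℕ} {S S' : Finset ℕ} :
    joinAtGap m S = joinAtGap m' S' ↔ m = m' ∧ S = S' := by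
  refine ⟨fun h => ?_, fun ⟨hm, hS⟩ => hm ▸ hS ▸ rfl⟩
  have hm : m = m' := by
    have h₁ : m ∉ joinAtGap m S := by simp [mem_joinAtGap]
    have h₂ : m' ∉ joinAtGap m' S' := by simp [mem_joinAtGap]
    rw [h, mem_joinAtGap] at h₁
    rw [← h, mem_joinAtGap] at h₂
    rcases lt_trichotomy m m' with hlt | heq | hlt
    · exact absurd (.inl hlt) h₁
    · exact heq
    · exact absurd (.inl hlt) h₂
  subst hm
  refine ⟨rfl, ext fun y => ?_⟩
  have := congrArg (y + (m + 1) ∈ ·) h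
  simp only [mem_joinAtGap, eq_iff_iff] at this
  simpa [show ¬ y + (m + 1) < m by omega, show m < y + (m + 1) by omega] using this

theorem joinAtGap_subset_range {m d : ℕ} {S : Finset ℕ} (hm : m ≤ d)
    (hS : S ⊆ range (d - m - 1)) :
    joinAtGap m S ⊆ range d := by
  intro c hc
  rcases mem_joinAtGap.mp hc with h | ⟨h, hc⟩
  · exact mem_range.mpr (by omega)
  · have := mem_range.mp (hS hc)
    exact mem_range.mpr (by omega)

theorem exists_joinAtGap_eq {d : ℕ} {S : Finset ℕ} (hS : S ⊆ range d) :
    ∃ m ≤ d, ∃ S' ⊆ range (d - m - 1), joinAtGap m S' = S := by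
  have hgap : ∃ c, c ∉ S := ⟨d, fun h => (mem_range.mp (hS h)).false⟩
  set m := Nat.find hgap
  refine ⟨m, Nat.find_min' hgap fun h => (mem_range.mp (hS h)).false,
    S.preimage (· + (m + 1)) (add_left_injective _).injOn, fun y hy => ?_, ?_⟩
  · have := mem_range.mp (hS (mem_preimage.mp hy))
    exact mem_range.mpr (by omega)
  ext c
  rw [mem_joinAtGap, mem_preimage]
  rcases lt_trichotomy c m with h | rfl | h
  · simpa [h] using Nat.find_min hgap h
  · simpa using Nat.find_spec hgap
  · simp [h, Nat.sub_add_cancel h, h.not_gt]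

theorem sum_powerset_range_eq_sum_joinAtGap {M : Type*} [AddCommMonoid M] (d : ℕ)
    (f : Finset ℕ → M) :
    ∑ S ∈ (range d).powerset, f S
      = ∑ m ∈ range (d + 1), ∑ S ∈ (range (d - m - 1)).powerset, f (joinAtGap m S) := by
  rw [sum_sigma']
  symm
  refine sum_bij (fun p _ => joinAtGap p.1 p.2) (fun p hp => ?_) (fun p _ q _ h => ?_)
    (fun S hS => ?_) (fun _ _ => rfl)
  · simp only [mem_sigma, mem_range, mem_powerset] at hp ⊢
    exact joinAtGap_subset_range (by omega) hp.2
  · obtain ⟨hm, hS⟩ := joinAtGap_inj.mp h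
    exact Sigma.ext hm (heq_of_eq hS)
  · obtain ⟨m, hm, S', hS', rfl⟩ := exists_joinAtGap_eq (mem_powerset.mp hS)
    exact ⟨⟨m, S'⟩, by simpa [Nat.lt_succ_iff] using ⟨hm, hS'⟩, rfl⟩

theorem mobiusH_add_two (n : ℕ) :
    mobiusH (n + 2) = ∑ j ∈ range (n + 2),
      (-1 : Polynomial ℤ) ^ j * Polynomial.X ^ ((j + 1) * j / 2) * mobiusH (n + 1 - j) := by
  rw [mobiusH]

theorem mobiusH_sub_one_add_one (k : ℕ) : mobiusH (k - 1 + 1) = mobiusH k := by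
  cases k with
  | zero => rw [mobiusH, mobiusH]
  | succ k => rfl

theorem sum_powerset_range_eq_mobiusH (d : ℕ) :
    ∑ S ∈ (range d).powerset, (-1 : Polynomial ℤ) ^ #S * Polynomial.X ^ intervalCount S
      = mobiusH (d + 1) := by
  induction d using Nat.strong_induction_on with
  | _ d ih =>
  cases d with
  | zero => simp [intervalCount, intervalPairs, mobiusH]
  | succ d =>
    rw [sum_powerset_range_eq_sum_joinAtGap, mobiusH_add_two]
    refine sum_congr rfl fun m hm => ?_
    have hsplit (S : Finset ℕ) :
        (-1 : Polynomial ℤ) ^ (m + #S) * Polynomial.X ^ ((m + 1) * m / 2 + intervalCount S) =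
          (-1) ^ m * Polynomial.X ^ ((m + 1) * m / 2) *
            ((-1) ^ #S * Polynomial.X ^ intervalCount S) := by ring
    simp only [card_joinAtGap, intervalCount_joinAtGap, hsplit, ← mul_sum]
    rw [ih _ (by omega), mobiusH_sub_one_add_one]

theorem exists_common_multiple_len_le_intervalCount {n : ℕ} {len : BraidMonoid n → ℕ}
    (hmul : ∀ x y, len (x * y) = len x + len y) (hgen : ∀ i, len (gen i) = 1) {d : ℕ}
    (s : ℕ) {S : Finset ℕ} (hS : S ⊆ range d) (hSn : ∀ i ∈ S, s + i < n - 1) :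
    ∃ w : BraidMonoid n, len w ≤ intervalCount S ∧ ∀ i ∈ S, gen' (s + i) ∣ w := by
  induction d using Nat.strong_induction_on generalizing s S with
  | _ d ih =>
  cases d with
  | zero =>
    obtain rfl : S = ∅ := subset_empty.mp hS
    exact ⟨1, (len_one hmul).le, by simp⟩
  | succ d =>
    obtain ⟨m, hm, S', hS', rfl⟩ := exists_joinAtGap_eq hS
    obtain ⟨w, hw, hdvd⟩ := ih (d + 1 - m - 1) (by omega) (s + m + 1) hS' fun i hi => by
      have := hSn (i + (m + 1)) (mem_joinAtGap.mpr (.inr ⟨by omega, by simpa using hi⟩))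
      omega
    refine ⟨blockGarside s m * w, ?_, fun i hi => ?_⟩
    · rw [hmul, intervalCount_joinAtGap]
      have := len_blockGarside_le hmul hgen s m
      omega
    rcases mem_joinAtGap.mp hi with hi | ⟨hi, hi'⟩
    · have := hSn (m - 1) (mem_joinAtGap.mpr (.inl (by omega)))
      exact dvd_mul_of_dvd_left (gen'_dvd_blockGarside (by omega) (by omega) (by omega)) w
    · obtain ⟨z, hz⟩ := hdvd _ hi'
      rw [show s + m + 1 + (i - (m + 1)) = s + i by omega] at hz
      refine ⟨blockGarside s m * z, ?_⟩
      rw [hz, ← mul_assoc, ← mul_assoc, (commute_gen'_blockGarside (by omega)).eq]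

theorem len_eq_intervalCount {n : ℕ} {len : BraidMonoid n → ℕ}
    (hmul : ∀ x y, len (x * y) = len x + len y) (hgen : ∀ i, len (gen i) = 1)
    {S : Finset (Fin (n - 1))} {x : BraidMonoid n} (hupper : ∀ i ∈ S, gen i ∣ x)
    (hleast : ∀ z, (∀ i ∈ S, gen i ∣ z) → x ∣ z) :
    len x = intervalCount (S.map Fin.valEmbedding) := by
  have hS : ∀ i ∈ S.map Fin.valEmbedding, i < n - 1 := by simp
  refine le_antisymm ?_ ?_
  · obtain ⟨w, hw, hdvd⟩ := exists_common_multiple_len_le_intervalCount hmul hgen 0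
      (fun i hi => mem_range.mpr (hS i hi)) (by simp)
    refine le_trans (len_le_of_dvd hmul (hleast w fun i hi => ?_)) hw
    simpa [gen'_val] using hdvd i (mem_map_of_mem _ hi)
  · calc intervalCount (S.map Fin.valEmbedding)
        ≤ invCount n ((sortAction x : Function.End (ℕ → ℕ)) id) :=
          intervalCount_le_invCount (fun i hi => by have := hS i hi; omega)
            (by simpa using fun i hi => sortAction_lt_of_dvd (hupper i hi))
      _ ≤ invCount n id + len x := invCount_sortAction_le hmul hgen x id
      _ = len x := by rw [invCount_id, zero_add]

theorem sum_finset_fin_eq_sum_powerset_range {M : Type*} [AddCommMonoid M] (k : ℕ)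
    (f : Finset ℕ → M) :
    ∑ S : Finset (Fin k), f (S.map Fin.valEmbedding) = ∑ S ∈ (range k).powerset, f S := by
  rw [← sum_image fun S _ T _ h => map_injective Fin.valEmbedding h]
  congr 1
  ext S
  rw [mem_image, mem_powerset, ← Nat.Iio_eq_range, ← Fin.map_valEmbedding_univ, subset_map_iff]
  simp [eq_comm]

theorem mobius_polynomial_inclusion_exclusion_general (n : ℕ)
    (len : BraidMonoid n → ℕ)
    (hlen_mul : ∀ x y : BraidMonoid n, len (x * y) = len x + len y)
    (hlen_gen : ∀ i : Fin (n - 1), len (gen i) = 1)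
    (Δhat : Finset (Fin (n - 1)) → BraidMonoid n)
    (hlub_l : ∀ X : Finset (Fin (n - 1)),
      (∀ i ∈ X, ldvd (gen i) (Δhat X)) ∧
        ∀ z : BraidMonoid n, (∀ i ∈ X, ldvd (gen i) z) → ldvd (Δhat X) z)
    :
    ∀ t : ℝ,
      (∑ X : Finset (Fin (n - 1)), (-1 : ℝ) ^ X.card * t ^ len (Δhat X)) =
        Polynomial.aeval t (mobiusH n) := by
  intro t
  have hlen (X : Finset (Fin (n - 1))) : len (Δhat X) = intervalCount (X.map Fin.valEmbedding) :=
    len_eq_intervalCount hlen_mul hlen_gen (hlub_l X).1 (hlub_l X).2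
  calc ∑ X : Finset (Fin (n - 1)), (-1 : ℝ) ^ X.card * t ^ len (Δhat X)
      = ∑ S ∈ (range (n - 1)).powerset, (-1 : ℝ) ^ #S * t ^ intervalCount S := by
        rw [← sum_finset_fin_eq_sum_powerset_range]
        simp only [hlen, card_map]
    _ = Polynomial.aeval t (∑ S ∈ (range (n - 1)).powerset,
          (-1 : Polynomial ℤ) ^ #S * Polynomial.X ^ intervalCount S) := by
        simp [map_sum]
    _ = Polynomial.aeval t (mobiusH n) := by
        rw [sum_powerset_range_eq_mobiusH, mobiusH_sub_one_add_one]

/-- For every real `t`,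
`Σ_{X ⊆ Σ} (-1)^{|X|} t^{ℓ(Δ_X)} = H_n(t)`. -/
theorem mobius_polynomial_inclusion_exclusion (n : ℕ) (hn : 1 ≤ n)
    (len : BraidMonoid n → ℕ)
    (hlen_mul : ∀ x y : BraidMonoid n, len (x * y) = len x + len y)
    (hlen_gen : ∀ i : Fin (n - 1), len (gen i) = 1)
    (Δhat : Finset (Fin (n - 1)) → BraidMonoid n)
    (hlub_l : ∀ X : Finset (Fin (n - 1)),
      (∀ i ∈ X, ldvd (gen i) (Δhat X)) ∧
        ∀ z : BraidMonoid n, (∀ i ∈ X, ldvd (gen i) z) → ldvd (Δhat X) z)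
    (hlub_r : ∀ X : Finset (Fin (n - 1)),
      (∀ i ∈ X, rdvd (gen i) (Δhat X)) ∧
        ∀ z : BraidMonoid n, (∀ i ∈ X, rdvd (gen i) z) → rdvd (Δhat X) z)
    :
    ∀ t : ℝ,
      (∑ X : Finset (Fin (n - 1)), (-1 : ℝ) ^ X.card * t ^ len (Δhat X)) =
        Polynomial.aeval t (mobiusH n) :=
  mobius_polynomial_inclusion_exclusion_general n len hlen_mul hlen_gen Δhat hlub_l

end BraidMeasure
end
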